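/- arXiv:0912.0795 — 7 statements merged into one kernel-verified Lean document; each statement's English description precedes it below -/
import Mathlib

section
/- The Apéry numbers A_n = Σ_{k=0}^n C(n,k)^2 C(n+k,k)^2 satisfy the three-term recurrence n^3 A_n = (34n^3 - 51n^2 + 27n - 5) A_{n-1} - (n-1)^3 A_{n-2} for all n ≥ 2. -/
/-- The Apéry numbers `A_n = Σ_{k=0}^n C(n,k)^2 C(n+k,k)^2`. -/
def aperyA (n : ℕ) : ℕ :=
  ∑ k ∈ Finset.range (n + 1), (Nat.choose n k) ^ 2 * (Nat.choose (n + k) k) ^ 2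

/-- Summand of the Apéry numbers, as an integer. -/
def apF (m k : ℕ) : ℤ := (Nat.choose m k : ℤ) ^ 2 * (Nat.choose (m + k) k : ℤ) ^ 2

/-- Zeilberger-style certificate for the Apéry recurrence. -/
def apG (n k : ℕ) : ℤ :=
  match k with
  | 0 => 0
  | j + 1 => 4 * (2 * (n : ℤ) + 1) * ((j : ℤ) * (2 * (j : ℤ) + 1) - (2 * (n : ℤ) + 1) ^ 2)
      * apF n j

lemma apKernel (m k : ℕ) :
    apG (m + 1) (k + 1) - apG (m + 1) k =
      ((m : ℤ) + 2) ^ 3 * apF (m + 2) k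
        - (34 * ((m : ℤ) + 1) ^ 3 + 51 * ((m : ℤ) + 1) ^ 2 + 27 * ((m : ℤ) + 1) + 5) * apF (m + 1) k
        + ((m : ℤ) + 1) ^ 3 * apF m k := by
  match k with
  | 0 =>
    simp only [apG, apF, Nat.choose_zero_right, Nat.add_zero, Nat.choose_self]
    push_cast
    ring
  | Nat.succ j =>
    rcases lt_trichotomy j (m + 1) with hj | hj | hj
    · -- generic case : j ≤ m
      have hjm : j ≤ m := by omega
      simp only [apG, apF]
      rw [show m + 1 + (j + 1) = m + j + 2 from by omega,
          show m + 1 + j = m + j + 1 from by omega,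
          show m + 2 + (j + 1) = m + j + 3 from by omega,
          show m + (j + 1) = m + j + 1 from by omega]
      have h1 := Nat.choose_succ_right_eq (m + 1) j
      have h2 := Nat.add_one_mul_choose_eq (m + j + 1) j
      have h3 := Nat.choose_mul_succ_eq (m + 1) (j + 1)
      have h4 := Nat.choose_mul_succ_eq (m + j + 2) (j + 1)
      have h5 := Nat.choose_mul_succ_eq m (j + 1)
      have h6 := Nat.choose_mul_succ_eq (m + j + 1) (j + 1)
      rw [show m + j + 1 + 1 = m + j + 2 from by omega] at h2
      rw [show m + 1 + 1 = m + 2 from by omega] at h3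
      rw [show m + j + 2 + 1 = m + j + 3 from by omega] at h4
      zify [show j ≤ m + 1 from by omega] at h1
      zify at h2
      zify [show j + 1 ≤ m + 2 from by omega] at h3
      zify [show j + 1 ≤ m + j + 3 from by omega] at h4
      zify [show j + 1 ≤ m + 1 from by omega] at h5
      zify [show j + 1 ≤ m + j + 2 from by omega] at h6
      push_cast
      set a : ℤ := ((m + 1).choose (j + 1) : ℤ) with ha
      set b : ℤ := ((m + j + 2).choose (j + 1) : ℤ) with hb
      set x1 : ℤ := ((m + 1).choose j : ℤ) with hx1
      set y2 : ℤ := ((m + j + 1).choose j : ℤ) with hy2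
      set x3 : ℤ := ((m + 2).choose (j + 1) : ℤ) with hx3
      set y4 : ℤ := ((m + j + 3).choose (j + 1) : ℤ) with hy4
      set x5 : ℤ := (m.choose (j + 1) : ℤ) with hx5
      set y6 : ℤ := ((m + j + 1).choose (j + 1) : ℤ) with hy6
      have E2 : x1 ^ 2 * y2 ^ 2 * ((m : ℤ) + 1 - j) ^ 2 * ((m : ℤ) + j + 2) ^ 2
          = a ^ 2 * b ^ 2 * ((j : ℤ) + 1) ^ 4 := by
        linear_combination (-(y2 * ((m : ℤ) + j + 2)) ^ 2 * (x1 * ((m : ℤ) + 1 - j) + a * ((j : ℤ) + 1))) * h1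
          + ((a * ((j : ℤ) + 1)) ^ 2 * (((m : ℤ) + j + 2) * y2 + b * ((j : ℤ) + 1))) * h2
      have E3 : x3 ^ 2 * y4 ^ 2 * ((m : ℤ) + 1 - j) ^ 2 * ((m : ℤ) + 2) ^ 2
          = a ^ 2 * b ^ 2 * ((m : ℤ) + 2) ^ 2 * ((m : ℤ) + j + 3) ^ 2 := by
        linear_combination (-(y4 * ((m : ℤ) + 2)) ^ 2 * (a * ((m : ℤ) + 2) + x3 * ((m : ℤ) + 1 - j))) * h3
          - ((a * ((m : ℤ) + 2)) ^ 2 * (b * ((m : ℤ) + j + 3) + y4 * ((m : ℤ) + 2))) * h4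
      have E4 : x5 ^ 2 * y6 ^ 2 * ((m : ℤ) + j + 2) ^ 2 * ((m : ℤ) + 1) ^ 2
          = a ^ 2 * b ^ 2 * ((m : ℤ) - j) ^ 2 * ((m : ℤ) + 1) ^ 2 := by
        linear_combination ((y6 * ((m : ℤ) + j + 2)) ^ 2 * (x5 * ((m : ℤ) + 1) + a * ((m : ℤ) - j))) * h5
          + ((a * ((m : ℤ) - j)) ^ 2 * (y6 * ((m : ℤ) + j + 2) + b * ((m : ℤ) + 1))) * h6
      have hd1 : ((m : ℤ) + 1 - j) ≠ 0 := by omega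
      have hd2 : ((m : ℤ) + j + 2) ≠ 0 := by omega
      have hd3 : ((m : ℤ) + 2) ≠ 0 := by omega
      have hd4 : ((m : ℤ) + 1) ≠ 0 := by omega
      have hM : ((m : ℤ) + 1 - j) ^ 2 * ((m : ℤ) + j + 2) ^ 2 * ((m : ℤ) + 2) ^ 2 * ((m : ℤ) + 1) ^ 2 ≠ 0 :=
        mul_ne_zero (mul_ne_zero (mul_ne_zero (pow_ne_zero 2 hd1) (pow_ne_zero 2 hd2))
          (pow_ne_zero 2 hd3)) (pow_ne_zero 2 hd4)
      refine mul_left_cancel₀ hM ?_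
      linear_combination
        (-(4 * (2 * ((m : ℤ) + 1) + 1) * ((j : ℤ) * (2 * (j : ℤ) + 1) - (2 * ((m : ℤ) + 1) + 1) ^ 2))
            * ((m : ℤ) + 2) ^ 2 * ((m : ℤ) + 1) ^ 2) * E2
          - (((m : ℤ) + 2) ^ 3 * ((m : ℤ) + j + 2) ^ 2 * ((m : ℤ) + 1) ^ 2) * E3
          - (((m : ℤ) + 1) ^ 3 * ((m : ℤ) + 1 - j) ^ 2 * ((m : ℤ) + 2) ^ 2) * E4
    · -- boundary case : j = m + 1
      subst hj
      simp only [apG, apF]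
      have c1 : Nat.choose (m + 1) (m + 1 + 1) = 0 := Nat.choose_eq_zero_of_lt (by omega)
      have c4 : Nat.choose m (m + 1 + 1) = 0 := Nat.choose_eq_zero_of_lt (by omega)
      rw [c1, c4,
          show m + 2 + (m + 1 + 1) = 2 * m + 4 from by omega,
          show m + 1 + (m + 1) = 2 * m + 2 from by omega,
          show (m + 2).choose (m + 1 + 1) = 1 from by
            rw [show m + 1 + 1 = m + 2 from by omega, Nat.choose_self],
          Nat.choose_self]
      have hA := Nat.add_one_mul_choose_eq (2 * m + 3) (m + 1)
      have hB := Nat.add_one_mul_choose_eq (2 * m + 2) (m + 1)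
      have hS : (2 * m + 3).choose (m + 1) = (2 * m + 3).choose (m + 2) := by
        rw [show m + 1 = 2 * m + 3 - (m + 2) from by omega]
        exact Nat.choose_symm (by omega)
      rw [show 2 * m + 3 + 1 = 2 * m + 4 from by omega, hS,
          show m + 1 + 1 = m + 2 from by omega] at hA
      rw [show 2 * m + 2 + 1 = 2 * m + 3 from by omega,
          show m + 1 + 1 = m + 2 from by omega] at hB
      zify at hA hB
      set u : ℤ := ((2 * m + 2).choose (m + 1) : ℤ) with hu
      set v : ℤ := ((2 * m + 3).choose (m + 2) : ℤ) with hv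
      set w : ℤ := ((2 * m + 4).choose (m + 2) : ℤ) with hw
      have hM : ((m : ℤ) + 2) ^ 4 ≠ 0 := pow_ne_zero 4 (by omega)
      refine mul_left_cancel₀ hM ?_
      push_cast
      linear_combination ((((m : ℤ) + 2) ^ 3 * (((m : ℤ) + 2) ^ 2 * w + (2 * (m : ℤ) + 4) * (2 * (m : ℤ) + 3) * u)) * ((m : ℤ) + 2)) * hA
        + ((((m : ℤ) + 2) ^ 3 * (((m : ℤ) + 2) ^ 2 * w + (2 * (m : ℤ) + 4) * (2 * (m : ℤ) + 3) * u)) * (2 * (m : ℤ) + 4)) * hB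
    · -- all terms vanish
      have c1 : Nat.choose (m + 1) (j + 1) = 0 := Nat.choose_eq_zero_of_lt (by omega)
      have c2 : Nat.choose (m + 1) j = 0 := Nat.choose_eq_zero_of_lt (by omega)
      have c3 : Nat.choose (m + 2) (j + 1) = 0 := Nat.choose_eq_zero_of_lt (by omega)
      have c4 : Nat.choose m (j + 1) = 0 := Nat.choose_eq_zero_of_lt (by omega)
      simp [apG, apF, c1, c2, c3, c4]

theorem aperyA_recurrence (n : ℕ) (hn : 2 ≤ n) :
    (n : ℤ) ^ 3 * (aperyA n : ℤ) =
      (34 * (n : ℤ) ^ 3 - 51 * (n : ℤ) ^ 2 + 27 * (n : ℤ) - 5) * (aperyA (n - 1) : ℤ)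
        - ((n : ℤ) - 1) ^ 3 * (aperyA (n - 2) : ℤ) := by
  obtain ⟨m, rfl⟩ : ∃ m, n = m + 2 := ⟨n - 2, by omega⟩
  have htel : ∑ k ∈ Finset.range (m + 3), (apG (m + 1) (k + 1) - apG (m + 1) k)
      = apG (m + 1) (m + 3) - apG (m + 1) 0 := Finset.sum_range_sub (apG (m + 1)) (m + 3)
  have hG0 : apG (m + 1) 0 = 0 := rfl
  have hGtop : apG (m + 1) (m + 3) = 0 := by
    show 4 * (2 * ((m + 1 : ℕ) : ℤ) + 1) * _ * apF (m + 1) (m + 2) = 0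
    have : Nat.choose (m + 1) (m + 2) = 0 := Nat.choose_eq_zero_of_lt (by omega)
    simp [apF, this]
  have hsum : ∑ k ∈ Finset.range (m + 3), (apG (m + 1) (k + 1) - apG (m + 1) k)
      = ((m : ℤ) + 2) ^ 3 * (∑ k ∈ Finset.range (m + 3), apF (m + 2) k)
        - (34 * ((m : ℤ) + 1) ^ 3 + 51 * ((m : ℤ) + 1) ^ 2 + 27 * ((m : ℤ) + 1) + 5)
            * (∑ k ∈ Finset.range (m + 3), apF (m + 1) k)
        + ((m : ℤ) + 1) ^ 3 * (∑ k ∈ Finset.range (m + 3), apF m k) := by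
    rw [Finset.mul_sum, Finset.mul_sum, Finset.mul_sum, ← Finset.sum_sub_distrib,
      ← Finset.sum_add_distrib]
    exact Finset.sum_congr rfl fun k _ => apKernel m k
  have hS2 : ∑ k ∈ Finset.range (m + 3), apF (m + 2) k = (aperyA (m + 2) : ℤ) := by
    unfold aperyA apF
    push_cast
    rw [show m + 2 + 1 = m + 3 from by omega]
  have hS1 : ∑ k ∈ Finset.range (m + 3), apF (m + 1) k = (aperyA (m + 1) : ℤ) := by
    rw [show m + 3 = m + 2 + 1 from by omega, Finset.sum_range_succ,
      show apF (m + 1) (m + 2) = 0 from by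
        simp [apF, Nat.choose_eq_zero_of_lt (show m + 1 < m + 2 from by omega)],
      add_zero]
    unfold aperyA apF
    push_cast
    rfl
  have hS0 : ∑ k ∈ Finset.range (m + 3), apF m k = (aperyA m : ℤ) := by
    rw [show m + 3 = m + 1 + 1 + 1 from by omega, Finset.sum_range_succ, Finset.sum_range_succ,
      show apF m (m + 1) = 0 from by
        simp [apF, Nat.choose_eq_zero_of_lt (show m < m + 1 from by omega)],
      show apF m (m + 1 + 1) = 0 from by
        simp [apF, Nat.choose_eq_zero_of_lt (show m < m + 1 + 1 from by omega)],
      add_zero, add_zero]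
    unfold aperyA apF
    push_cast
    rfl
  rw [hS2, hS1, hS0, htel, hG0, hGtop] at hsum
  rw [show m + 2 - 1 = m + 1 from by omega, show m + 2 - 2 = m from by omega]
  push_cast
  linear_combination -hsum
end

section
/- The Apéry numbers B_n = Σ_{k=0}^n C(n,k)^2 C(n+k,k) satisfy the three-term recurrence n^2 B_n = (11n^2 - 11n + 3) B_{n-1} + (n-1)^2 B_{n-2} for all n ≥ 2. -/
open scoped Nat

/-- The Apéry numbers `B_n = Σ_{k=0}^n C(n,k)^2 C(n+k,k)`. -/
def aperyB (n : ℕ) : ℕ :=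
  ∑ k ∈ Finset.range (n + 1), (Nat.choose n k) ^ 2 * Nat.choose (n + k) k

/-- The summand, as a rational number. -/
def Fq (n k : ℕ) : ℚ := ((n.choose k : ℚ))^2 * (((n+k).choose k : ℚ))

/-- WZ certificate term for `n = m+2`. -/
def gq (m : ℕ) : ℕ → ℚ
  | 0 => 0
  | k + 1 =>
      (((k : ℚ) + 1)^2 + (6*(m:ℚ)+7)*((k:ℚ)+1) - 11*(m:ℚ)^2 - 37*(m:ℚ) - 30)
        * ((((m+1).choose k : ℚ))^2 * (((m+1+k).choose k : ℚ)))

set_option maxHeartbeats 1000000 in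
lemma key (m k : ℕ) :
    ((m:ℚ)+2)^2 * Fq (m+2) k
      - (11*((m:ℚ)+2)^2 - 11*((m:ℚ)+2) + 3) * Fq (m+1) k
      - ((m:ℚ)+1)^2 * Fq m k
    = gq m (k+1) - gq m k := by
  rcases Nat.eq_zero_or_pos k with rfl | hk
  · simp [Fq, gq]
    ring
  obtain ⟨j, rfl⟩ : ∃ j, k = j + 1 := ⟨k - 1, by omega⟩
  rcases (by omega : j < m ∨ j = m ∨ j = m + 1 ∨ m + 2 ≤ j) with h | rfl | rfl | h
  · -- generic case: k = j+1 ≤ m, write m = j+d+1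
    obtain ⟨d, rfl⟩ : ∃ d, m = j + d + 1 := ⟨m - j - 1, by omega⟩
    simp only [Fq, gq]
    have c1 : (((j+d+1+2).choose (j+1) : ℚ)) = ((j+d+3)! : ℚ) / (((j+1)! : ℚ) * ((d+2)! : ℚ)) := by
      rw [show j+d+1+2 = j+d+3 from by omega, Nat.cast_choose ℚ (by omega : j+1 ≤ j+d+3),
        show j+d+3 - (j+1) = d+2 from by omega]
    have c2 : (((j+d+1+2+(j+1)).choose (j+1) : ℚ)) = ((2*j+d+4)! : ℚ) / (((j+1)! : ℚ) * ((j+d+3)! : ℚ)) := by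
      rw [show j+d+1+2+(j+1) = 2*j+d+4 from by omega, Nat.cast_choose ℚ (by omega : j+1 ≤ 2*j+d+4),
        show 2*j+d+4 - (j+1) = j+d+3 from by omega]
    have c3 : (((j+d+1+1).choose (j+1) : ℚ)) = ((j+d+2)! : ℚ) / (((j+1)! : ℚ) * ((d+1)! : ℚ)) := by
      rw [show j+d+1+1 = j+d+2 from by omega, Nat.cast_choose ℚ (by omega : j+1 ≤ j+d+2),
        show j+d+2 - (j+1) = d+1 from by omega]
    have c4 : (((j+d+1+1+(j+1)).choose (j+1) : ℚ)) = ((2*j+d+3)! : ℚ) / (((j+1)! : ℚ) * ((j+d+2)! : ℚ)) := by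
      rw [show j+d+1+1+(j+1) = 2*j+d+3 from by omega, Nat.cast_choose ℚ (by omega : j+1 ≤ 2*j+d+3),
        show 2*j+d+3 - (j+1) = j+d+2 from by omega]
    have c5 : (((j+d+1).choose (j+1) : ℚ)) = ((j+d+1)! : ℚ) / (((j+1)! : ℚ) * ((d)! : ℚ)) := by
      rw [Nat.cast_choose ℚ (by omega : j+1 ≤ j+d+1),
        show j+d+1 - (j+1) = d from by omega]
    have c6 : (((j+d+1+(j+1)).choose (j+1) : ℚ)) = ((2*j+d+2)! : ℚ) / (((j+1)! : ℚ) * ((j+d+1)! : ℚ)) := by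
      rw [show j+d+1+(j+1) = 2*j+d+2 from by omega, Nat.cast_choose ℚ (by omega : j+1 ≤ 2*j+d+2),
        show 2*j+d+2 - (j+1) = j+d+1 from by omega]
    have c7 : (((j+d+1+1).choose j : ℚ)) = ((j+d+2)! : ℚ) / (((j)! : ℚ) * ((d+2)! : ℚ)) := by
      rw [show j+d+1+1 = j+d+2 from by omega, Nat.cast_choose ℚ (by omega : j ≤ j+d+2),
        show j+d+2 - j = d+2 from by omega]
    have c8 : (((j+d+1+1+j).choose j : ℚ)) = ((2*j+d+2)! : ℚ) / (((j)! : ℚ) * ((j+d+2)! : ℚ)) := by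
      rw [show j+d+1+1+j = 2*j+d+2 from by omega, Nat.cast_choose ℚ (by omega : j ≤ 2*j+d+2),
        show 2*j+d+2 - j = j+d+2 from by omega]
    have f1 : ((j+d+3)! : ℚ) = ((j:ℚ)+d+3)*(((j:ℚ)+d+2)*((j+d+1)! : ℚ)) := by
      rw [show j+d+3 = (j+d+2)+1 from by omega, Nat.factorial_succ,
        show j+d+2 = (j+d+1)+1 from by omega, Nat.factorial_succ]
      push_cast; ring
    have f2 : ((j+d+2)! : ℚ) = ((j:ℚ)+d+2)*((j+d+1)! : ℚ) := by
      rw [show j+d+2 = (j+d+1)+1 from by omega, Nat.factorial_succ]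
      push_cast; ring
    have f3 : ((j+1)! : ℚ) = ((j:ℚ)+1)*((j)! : ℚ) := by
      rw [Nat.factorial_succ]; push_cast; ring
    have f4 : ((d+2)! : ℚ) = ((d:ℚ)+2)*(((d:ℚ)+1)*((d)! : ℚ)) := by
      rw [show d+2 = (d+1)+1 from by omega, Nat.factorial_succ, Nat.factorial_succ]
      push_cast; ring
    have f5 : ((d+1)! : ℚ) = ((d:ℚ)+1)*((d)! : ℚ) := by
      rw [Nat.factorial_succ]; push_cast; ring
    have f6 : ((2*j+d+4)! : ℚ) = (2*(j:ℚ)+d+4)*((2*(j:ℚ)+d+3)*((2*j+d+2)! : ℚ)) := by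
      rw [show 2*j+d+4 = (2*j+d+3)+1 from by omega, Nat.factorial_succ,
        show 2*j+d+3 = (2*j+d+2)+1 from by omega, Nat.factorial_succ]
      push_cast; ring
    have f7 : ((2*j+d+3)! : ℚ) = (2*(j:ℚ)+d+3)*((2*j+d+2)! : ℚ) := by
      rw [show 2*j+d+3 = (2*j+d+2)+1 from by omega, Nat.factorial_succ]
      push_cast; ring
    have hA : ((j)! : ℚ) ≠ 0 := by positivity
    have hB : ((d)! : ℚ) ≠ 0 := by positivity
    have hE : ((j+d+1)! : ℚ) ≠ 0 := by positivity
    have hT : ((2*j+d+2)! : ℚ) ≠ 0 := by positivity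
    have h1 : ((j:ℚ)+1) ≠ 0 := by positivity
    have h2 : ((d:ℚ)+1) ≠ 0 := by positivity
    have h3 : ((d:ℚ)+2) ≠ 0 := by positivity
    -- the common "base" of all five hypergeometric terms
    have t1 : (((j+d+1+2).choose (j+1) : ℚ))^2 * (((j+d+1+2+(j+1)).choose (j+1) : ℚ))
        = (((j:ℚ)+d+3)*((j:ℚ)+d+2)*(2*(j:ℚ)+d+4)*(2*(j:ℚ)+d+3))
          * (((j+d+1)! : ℚ) * ((2*j+d+2)! : ℚ)
            / (((j:ℚ)+1)^3 * ((j)! : ℚ)^3 * ((d:ℚ)+1)^2 * ((d:ℚ)+2)^2 * ((d)! : ℚ)^2)) := by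
      rw [c1, c2, f1, f6, f3, f4]
      field_simp
    have t2 : (((j+d+1+1).choose (j+1) : ℚ))^2 * (((j+d+1+1+(j+1)).choose (j+1) : ℚ))
        = (((j:ℚ)+d+2)*(2*(j:ℚ)+d+3)*((d:ℚ)+2)^2)
          * (((j+d+1)! : ℚ) * ((2*j+d+2)! : ℚ)
            / (((j:ℚ)+1)^3 * ((j)! : ℚ)^3 * ((d:ℚ)+1)^2 * ((d:ℚ)+2)^2 * ((d)! : ℚ)^2)) := by
      rw [c3, c4, f2, f7, f3, f5]
      field_simp
    have t3 : (((j+d+1).choose (j+1) : ℚ))^2 * (((j+d+1+(j+1)).choose (j+1) : ℚ))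
        = (((d:ℚ)+1)^2*((d:ℚ)+2)^2)
          * (((j+d+1)! : ℚ) * ((2*j+d+2)! : ℚ)
            / (((j:ℚ)+1)^3 * ((j)! : ℚ)^3 * ((d:ℚ)+1)^2 * ((d:ℚ)+2)^2 * ((d)! : ℚ)^2)) := by
      rw [c5, c6, f3]
      field_simp
    have t5 : (((j+d+1+1).choose j : ℚ))^2 * (((j+d+1+1+j).choose j : ℚ))
        = (((j:ℚ)+d+2)*((j:ℚ)+1)^3)
          * (((j+d+1)! : ℚ) * ((2*j+d+2)! : ℚ)
            / (((j:ℚ)+1)^3 * ((j)! : ℚ)^3 * ((d:ℚ)+1)^2 * ((d:ℚ)+2)^2 * ((d)! : ℚ)^2)) := by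
      rw [c7, c8, f2, f4]
      field_simp
    rw [t1, t2, t3, t5]
    push_cast
    ring
  · -- k = m+1 (here j = m)
    simp only [Fq, gq]
    have h0 : (j).choose (j+1) = 0 := Nat.choose_eq_zero_of_lt (by omega)
    have cA : (((j+2).choose (j+1) : ℚ)) = ((j:ℚ)+2) := by
      rw [show j+2 = (j+1)+1 from by omega, Nat.choose_succ_self_right]; push_cast; ring
    have c2 : (((j+2+(j+1)).choose (j+1) : ℚ)) = ((2*j+3)! : ℚ) / (((j+1)! : ℚ) * ((j+2)! : ℚ)) := by
      rw [show j+2+(j+1) = 2*j+3 from by omega, Nat.cast_choose ℚ (by omega : j+1 ≤ 2*j+3),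
        show 2*j+3 - (j+1) = j+2 from by omega]
    have c3 : (((j+1).choose (j+1) : ℚ)) = 1 := by rw [Nat.choose_self]; norm_num
    have c4 : (((j+1+(j+1)).choose (j+1) : ℚ)) = ((2*j+2)! : ℚ) / (((j+1)! : ℚ) * ((j+1)! : ℚ)) := by
      rw [show j+1+(j+1) = 2*j+2 from by omega, Nat.cast_choose ℚ (by omega : j+1 ≤ 2*j+2),
        show 2*j+2 - (j+1) = j+1 from by omega]
    have c7 : (((j+1).choose j : ℚ)) = ((j:ℚ)+1) := by
      rw [Nat.choose_succ_self_right]; push_cast; ring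
    have c8 : (((j+1+j).choose j : ℚ)) = ((2*j+1)! : ℚ) / (((j)! : ℚ) * ((j+1)! : ℚ)) := by
      rw [show j+1+j = 2*j+1 from by omega, Nat.cast_choose ℚ (by omega : j ≤ 2*j+1),
        show 2*j+1 - j = j+1 from by omega]
    have f1 : ((j+2)! : ℚ) = ((j:ℚ)+2)*(((j:ℚ)+1)*((j)! : ℚ)) := by
      rw [show j+2 = (j+1)+1 from by omega, Nat.factorial_succ, Nat.factorial_succ]
      push_cast; ring
    have f3 : ((j+1)! : ℚ) = ((j:ℚ)+1)*((j)! : ℚ) := by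
      rw [Nat.factorial_succ]; push_cast; ring
    have f6 : ((2*j+3)! : ℚ) = (2*(j:ℚ)+3)*((2*(j:ℚ)+2)*((2*j+1)! : ℚ)) := by
      rw [show 2*j+3 = (2*j+2)+1 from by omega, Nat.factorial_succ,
        show 2*j+2 = (2*j+1)+1 from by omega, Nat.factorial_succ]
      push_cast; ring
    have f7 : ((2*j+2)! : ℚ) = (2*(j:ℚ)+2)*((2*j+1)! : ℚ) := by
      rw [show 2*j+2 = (2*j+1)+1 from by omega, Nat.factorial_succ]
      push_cast; ring
    have hA : ((j)! : ℚ) ≠ 0 := by positivity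
    have hT : ((2*j+1)! : ℚ) ≠ 0 := by positivity
    have h1 : ((j:ℚ)+1) ≠ 0 := by positivity
    have u1 : (((j+2).choose (j+1) : ℚ))^2 * (((j+2+(j+1)).choose (j+1) : ℚ))
        = (((j:ℚ)+2)*(2*(j:ℚ)+3)*(2*(j:ℚ)+2))
          * (((2*j+1)! : ℚ) / (((j:ℚ)+1)^2 * ((j)! : ℚ)^2)) := by
      rw [cA, c2, f1, f6, f3]
      field_simp
    have u2 : (((j+1).choose (j+1) : ℚ))^2 * (((j+1+(j+1)).choose (j+1) : ℚ))
        = (2*(j:ℚ)+2) * (((2*j+1)! : ℚ) / (((j:ℚ)+1)^2 * ((j)! : ℚ)^2)) := by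
      rw [c3, c4, f7, f3]
      field_simp
    have u5 : (((j+1).choose j : ℚ))^2 * (((j+1+j).choose j : ℚ))
        = ((j:ℚ)+1)^3 * (((2*j+1)! : ℚ) / (((j:ℚ)+1)^2 * ((j)! : ℚ)^2)) := by
      rw [c7, c8, f3]
      field_simp
    rw [h0, u1, u2, u5]
    push_cast
    ring
  · -- k = m+2 (here j = m+1)
    simp only [Fq, gq]
    have z1 : (m+1).choose (m+1+1) = 0 := Nat.choose_eq_zero_of_lt (by omega)
    have z2 : (m).choose (m+1+1) = 0 := Nat.choose_eq_zero_of_lt (by omega)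
    have cA : (((m+2).choose (m+1+1) : ℚ)) = 1 := by
      rw [show m+1+1 = m+2 from by omega, Nat.choose_self]; norm_num
    have c2 : (((m+2+(m+1+1)).choose (m+1+1) : ℚ))
        = ((2*m+4)! : ℚ) / (((m+2)! : ℚ) * ((m+2)! : ℚ)) := by
      rw [show m+2+(m+1+1) = 2*m+4 from by omega, show m+1+1 = m+2 from by omega,
        Nat.cast_choose ℚ (by omega : m+2 ≤ 2*m+4), show 2*m+4 - (m+2) = m+2 from by omega]
    have c3 : (((m+1).choose (m+1) : ℚ)) = 1 := by rw [Nat.choose_self]; norm_num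
    have c4 : (((m+1+(m+1)).choose (m+1) : ℚ))
        = ((2*m+2)! : ℚ) / (((m+1)! : ℚ) * ((m+1)! : ℚ)) := by
      rw [show m+1+(m+1) = 2*m+2 from by omega, Nat.cast_choose ℚ (by omega : m+1 ≤ 2*m+2),
        show 2*m+2 - (m+1) = m+1 from by omega]
    have f1 : ((2*m+4)! : ℚ) = (2*(m:ℚ)+4)*((2*(m:ℚ)+3)*((2*m+2)! : ℚ)) := by
      rw [show 2*m+4 = (2*m+3)+1 from by omega, Nat.factorial_succ,
        show 2*m+3 = (2*m+2)+1 from by omega, Nat.factorial_succ]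
      push_cast; ring
    have f2 : ((m+2)! : ℚ) = ((m:ℚ)+2)*((m+1)! : ℚ) := by
      rw [show m+2 = (m+1)+1 from by omega, Nat.factorial_succ]
      push_cast; ring
    have hA : ((m+1)! : ℚ) ≠ 0 := by positivity
    have hT : ((2*m+2)! : ℚ) ≠ 0 := by positivity
    have h1 : ((m:ℚ)+2) ≠ 0 := by positivity
    have v1 : (((m+2).choose (m+1+1) : ℚ))^2 * (((m+2+(m+1+1)).choose (m+1+1) : ℚ))
        = ((2*(m:ℚ)+4)*(2*(m:ℚ)+3)/((m:ℚ)+2)^2) * (((2*m+2)! : ℚ) / ((m+1)! : ℚ)^2) := by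
      rw [cA, c2, f1, f2]
      field_simp
    have v2 : (((m+1).choose (m+1) : ℚ))^2 * (((m+1+(m+1)).choose (m+1) : ℚ))
        = ((2*m+2)! : ℚ) / ((m+1)! : ℚ)^2 := by
      rw [c3, c4]
      ring
    rw [z1, z2, v1, v2]
    have hz : ((((m+1+1:ℕ) : ℚ) + 1)^2 + (6*(m:ℚ)+7)*(((m+1+1:ℕ):ℚ)+1) - 11*(m:ℚ)^2 - 37*(m:ℚ) - 30)
        * (((0:ℕ) : ℚ)^2 * (((m+1+(m+1+1)).choose (m+1+1) : ℚ))) = 0 := by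
      push_cast; ring
    push_cast
    field_simp
    ring
  · -- k ≥ m+3 : everything vanishes
    have h1 : (m+2).choose (j+1) = 0 := Nat.choose_eq_zero_of_lt (by omega)
    have h2 : (m+1).choose (j+1) = 0 := Nat.choose_eq_zero_of_lt (by omega)
    have h3 : (m).choose (j+1) = 0 := Nat.choose_eq_zero_of_lt (by omega)
    have h4 : (m+1).choose j = 0 := Nat.choose_eq_zero_of_lt (by omega)
    simp [Fq, gq, h1, h2, h3, h4]

theorem aperyB_recurrence (n : ℕ) (hn : 2 ≤ n) :
    (n : ℤ) ^ 2 * (aperyB n : ℤ) =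
      (11 * (n : ℤ) ^ 2 - 11 * (n : ℤ) + 3) * (aperyB (n - 1) : ℤ)
        + ((n : ℤ) - 1) ^ 2 * (aperyB (n - 2) : ℤ) := by
  obtain ⟨m, rfl⟩ : ∃ m, n = m + 2 := ⟨n - 2, by omega⟩
  have e1 : m + 2 - 1 = m + 1 := by omega
  have e2 : m + 2 - 2 = m := by omega
  rw [e1, e2]
  have cast1 : ∀ N : ℕ, (aperyB N : ℚ) = ∑ k ∈ Finset.range (N+1), Fq N k := by
    intro N
    unfold aperyB Fq
    push_cast
    rfl
  have hsum : ∑ k ∈ Finset.range (m+3),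
      (((m:ℚ)+2)^2 * Fq (m+2) k
        - (11*((m:ℚ)+2)^2 - 11*((m:ℚ)+2) + 3) * Fq (m+1) k
        - ((m:ℚ)+1)^2 * Fq m k) = 0 := by
    rw [Finset.sum_congr rfl (fun k _ => key m k), Finset.sum_range_sub (gq m)]
    have hz1 : gq m (m+3) = 0 := by
      rw [show m+3 = (m+2)+1 from by omega]
      have : (m+1).choose (m+2) = 0 := Nat.choose_eq_zero_of_lt (by omega)
      simp [gq, this]
    rw [hz1]
    simp [gq]
  rw [Finset.sum_sub_distrib, Finset.sum_sub_distrib, ← Finset.mul_sum, ← Finset.mul_sum,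
    ← Finset.mul_sum] at hsum
  have z1 : Fq (m+1) (m+2) = 0 := by
    simp [Fq, Nat.choose_eq_zero_of_lt (by omega : m+1 < m+2)]
  have z2 : Fq m (m+2) = 0 := by
    simp [Fq, Nat.choose_eq_zero_of_lt (by omega : m < m+2)]
  have z3 : Fq m (m+1) = 0 := by
    simp [Fq, Nat.choose_eq_zero_of_lt (by omega : m < m+1)]
  have r1 : ∑ k ∈ Finset.range (m+3), Fq (m+1) k = ∑ k ∈ Finset.range (m+2), Fq (m+1) k := by
    rw [show m+3 = (m+2)+1 from by omega, Finset.sum_range_succ, z1, add_zero]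
  have r2 : ∑ k ∈ Finset.range (m+3), Fq m k = ∑ k ∈ Finset.range (m+1), Fq m k := by
    rw [show m+3 = (m+2)+1 from by omega, Finset.sum_range_succ, z2, add_zero,
      show m+2 = (m+1)+1 from by omega, Finset.sum_range_succ, z3, add_zero]
  rw [r1, r2] at hsum
  have key2 : ((m:ℚ)+2)^2 * (aperyB (m+2) : ℚ)
      = (11*((m:ℚ)+2)^2 - 11*((m:ℚ)+2) + 3) * (aperyB (m+1) : ℚ)
        + ((m:ℚ)+1)^2 * (aperyB m : ℚ) := by
    rw [cast1, cast1, cast1, show m+2+1 = m+3 from by omega,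
      show m+1+1 = m+2 from by omega]
    linarith [hsum]
  qify
  push_cast at key2 ⊢
  linarith [key2]
end

section
/- The sequence of Apéry numbers A_n is strictly log-convex: A_n^2 < A_{n-1} A_{n+1} for all n ≥ 1. -/
open Finset

def SatisfiesAperyRecurrence (f : ℕ → ℕ) : Prop :=
  ∀ n, (n + 2) ^ 3 * f (n + 2) + (n + 1) ^ 3 * f n
    = (34 * (n + 1) ^ 3 + 51 * (n + 1) ^ 2 + 27 * (n + 1) + 5) * f (n + 1)

def aperyTerm (n k : ℕ) : ℕ := n.choose k * (n + k).choose k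

lemma aperyTerm_eq_zero_of_lt {n k : ℕ} (h : n < k) : aperyTerm n k = 0 := by
  simp [aperyTerm, Nat.choose_eq_zero_of_lt h]

lemma aperyA_eq_sum_aperyTerm_sq {n N : ℕ} (h : n < N) :
    aperyA n = ∑ k ∈ range N, aperyTerm n k ^ 2 := by
  refine Finset.sum_subset (range_subset_range.2 h) (fun k _ hk => ?_) |>.trans ?_
  · simp only [mem_range, not_lt] at hk
    rw [← mul_pow, Nat.choose_eq_zero_of_lt (by omega), zero_mul, zero_pow two_ne_zero]
  · simp only [aperyTerm, mul_pow]

lemma aperyTerm_succ_right (m j : ℕ) :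
    (aperyTerm m (j + 1) : ℤ) * (j + 1) ^ 2 = aperyTerm m j * ((m : ℤ) - j) * (m + j + 1) := by
  rcases le_or_gt j m with hj | hj
  · have h₁ := Nat.choose_succ_right_eq m j
    have h₂ := Nat.add_one_mul_choose_eq (m + j) j
    rw [← Nat.cast_inj (R := ℤ)] at h₁ h₂
    push_cast [hj] at h₁ h₂
    simp only [aperyTerm, ← add_assoc]
    push_cast
    linear_combination
      ((m + j + 1).choose (j + 1) * (j + 1) : ℤ) * h₁ - ((m.choose j : ℤ) * (m - j)) * h₂
  · simp [aperyTerm_eq_zero_of_lt hj, aperyTerm_eq_zero_of_lt (hj.trans j.lt_succ_self)]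

lemma aperyTerm_succ_left (m k : ℕ) :
    (aperyTerm (m + 1) k : ℤ) * ((m : ℤ) + 1 - k) = aperyTerm m k * (m + k + 1) := by
  rcases le_or_gt k (m + 1) with hk | hk
  · have h₁ := Nat.choose_mul_succ_eq m k
    have h₂ := Nat.choose_mul_succ_eq (m + k) k
    rw [← Nat.cast_inj (R := ℤ)] at h₁ h₂
    push_cast [hk, show k ≤ m + k + 1 by omega] at h₁ h₂
    have hm : (m : ℤ) + 1 ≠ 0 := by positivity
    refine mul_left_cancel₀ hm ?_
    simp only [aperyTerm, show m + 1 + k = m + k + 1 by omega]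
    push_cast
    linear_combination
      -((m + k).choose k * (m + k + 1) : ℤ) * h₁ - ((m + 1).choose k * (m + 1 - k) : ℤ) * h₂
  · simp [aperyTerm_eq_zero_of_lt hk, aperyTerm_eq_zero_of_lt (show m < k by omega)]

lemma aperyTerm_succ_succ (m j : ℕ) :
    (aperyTerm (m + 1) (j + 1) : ℤ) * (j + 1) ^ 2 = aperyTerm m j * (m + j + 1) * (m + j + 2) := by
  have h₁ := aperyTerm_succ_right (m + 1) j
  have h₂ := aperyTerm_succ_left m j
  push_cast at h₁
  linear_combination h₁ + ((m : ℤ) + j + 2) * h₂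

lemma aperyTerm_succ_right_eq_succ_left (m j : ℕ) :
    (aperyTerm m (j + 1) : ℤ) * (j + 1) ^ 2
      = aperyTerm (m + 1) j * ((m : ℤ) - j) * (m + 1 - j) := by
  linear_combination aperyTerm_succ_right m j - ((m : ℤ) - j) * aperyTerm_succ_left m j

def aperyCert (n k : ℕ) : ℤ :=
  4 * (2 * n + 3) * (k * (2 * k + 1) - (2 * n + 3) ^ 2) * aperyTerm (n + 1) k ^ 2

lemma aperyTerm_recurrence_zero (n : ℕ) :
    ((n : ℤ) + 2) ^ 3 * aperyTerm (n + 2) 0 ^ 2 + ((n : ℤ) + 1) ^ 3 * aperyTerm n 0 ^ 2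
      - (34 * ((n : ℤ) + 1) ^ 3 + 51 * ((n : ℤ) + 1) ^ 2 + 27 * ((n : ℤ) + 1) + 5)
        * aperyTerm (n + 1) 0 ^ 2 = aperyCert n 0 := by
  simp only [aperyCert, aperyTerm, Nat.choose_zero_right]
  push_cast
  ring

lemma aperyTerm_recurrence_succ (n j : ℕ) :
    ((n : ℤ) + 2) ^ 3 * aperyTerm (n + 2) (j + 1) ^ 2 + ((n : ℤ) + 1) ^ 3 * aperyTerm n (j + 1) ^ 2
      - (34 * ((n : ℤ) + 1) ^ 3 + 51 * ((n : ℤ) + 1) ^ 2 + 27 * ((n : ℤ) + 1) + 5)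
        * aperyTerm (n + 1) (j + 1) ^ 2 = aperyCert n (j + 1) - aperyCert n j := by
  have hy := aperyTerm_succ_right (n + 1) j
  have hp := aperyTerm_succ_right_eq_succ_left n j
  have hq := aperyTerm_succ_succ (n + 1) j
  simp only [aperyCert]
  push_cast at hy hq ⊢
  set x : ℤ := ((aperyTerm (n + 1) j : ℕ) : ℤ)
  set y : ℤ := ((aperyTerm (n + 1) (j + 1) : ℕ) : ℤ)
  set p : ℤ := ((aperyTerm n (j + 1) : ℕ) : ℤ)
  set q : ℤ := ((aperyTerm (n + 2) (j + 1) : ℕ) : ℤ)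
  -- scaled by `(j+1)⁴`, the identity becomes polynomial in `x` via `hy`, `hp`, `hq`
  have hs : ((j : ℤ) + 1) ^ 4 ≠ 0 := by positivity
  refine mul_left_cancel₀ hs ?_
  linear_combination
    ((n : ℤ) + 2) ^ 3 * (q * (j + 1) ^ 2 + x * (n + 1 + j + 1) * (n + 1 + j + 2)) * hq
    + ((n : ℤ) + 1) ^ 3 * (p * (j + 1) ^ 2 + x * (n - j) * (n + 1 - j)) * hp
    - (34 * ((n : ℤ) + 1) ^ 3 + 51 * ((n : ℤ) + 1) ^ 2 + 27 * ((n : ℤ) + 1) + 5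
      + 4 * (2 * n + 3) * ((j + 1) * (2 * (j + 1) + 1) - (2 * n + 3) ^ 2))
      * (y * (j + 1) ^ 2 + x * (n + 1 - j) * (n + 1 + j + 1)) * hy

lemma sum_range_aperyTerm_recurrence (n N : ℕ) :
    ∑ k ∈ range (N + 1), (((n : ℤ) + 2) ^ 3 * aperyTerm (n + 2) k ^ 2
      + ((n : ℤ) + 1) ^ 3 * aperyTerm n k ^ 2
      - (34 * ((n : ℤ) + 1) ^ 3 + 51 * ((n : ℤ) + 1) ^ 2 + 27 * ((n : ℤ) + 1) + 5)
        * aperyTerm (n + 1) k ^ 2) = aperyCert n N := by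
  induction N with
  | zero => simpa using aperyTerm_recurrence_zero n
  | succ N ih => rw [sum_range_succ, ih, aperyTerm_recurrence_succ]; ring

theorem satisfiesAperyRecurrence_aperyA : SatisfiesAperyRecurrence aperyA := by
  intro n
  have h := sum_range_aperyTerm_recurrence n (n + 2)
  rw [aperyCert, aperyTerm_eq_zero_of_lt (by omega : n + 1 < n + 2), sum_sub_distrib,
    sum_add_distrib, ← mul_sum, ← mul_sum, ← mul_sum] at h
  zify
  rw [aperyA_eq_sum_aperyTerm_sq (N := n + 3) (by omega),
    aperyA_eq_sum_aperyTerm_sq (N := n + 3) (by omega),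
    aperyA_eq_sum_aperyTerm_sq (N := n + 3) (by omega)]
  push_cast
  linear_combination h

lemma sq_lt_mul_of_aperyRecurrence_step
    {R : Type*} [CommRing R] [LinearOrder R] [IsStrictOrderedRing R]
    {u a b c d : R} (hu : 0 ≤ u) (ha : 0 ≤ a) (hab : a ≤ b) (hc : 0 ≤ c)
    (h₁ : (u + 1) ^ 3 * c + u ^ 3 * a = (34 * u ^ 3 + 51 * u ^ 2 + 27 * u + 5) * b)
    (h₂ : (u + 2) ^ 3 * d + (u + 1) ^ 3 * b
      = (34 * (u + 1) ^ 3 + 51 * (u + 1) ^ 2 + 27 * (u + 1) + 5) * c)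
    (hlc : b ^ 2 < a * c) : c ^ 2 < b * d := by
  -- the two quartics are `E = (u+1)³P(u+1) - (u+2)³P(u)` and `E - ((u+1)⁶ - u³(u+2)³)`,
  -- `P` being the middle coefficient of the recurrence
  have key : (u + 1) ^ 3 * (u + 2) ^ 3 * (b * d - c ^ 2) = (u + 1) ^ 6 * (a * c - b ^ 2)
      + c * ((b - a) * (51 * u ^ 4 + 252 * u ^ 3 + 435 * u ^ 2 + 306 * u + 77)
        + a * (48 * u ^ 4 + 240 * u ^ 3 + 420 * u ^ 2 + 300 * u + 76)) := by
    linear_combination (u + 1) ^ 3 * b * h₂ - (u + 2) ^ 3 * c * h₁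
  have hpos : 0 < (u + 1) ^ 3 * (u + 2) ^ 3 * (b * d - c ^ 2) := by
    rw [key]
    refine add_pos_of_pos_of_nonneg (mul_pos (by positivity) (sub_pos.2 hlc)) ?_
    have := sub_nonneg.2 hab
    positivity
  linarith [pos_of_mul_pos_right hpos (by positivity)]

namespace SatisfiesAperyRecurrence

variable {f : ℕ → ℕ}

theorem monotone (hf : SatisfiesAperyRecurrence f) (h01 : f 0 ≤ f 1) : Monotone f := by
  refine monotone_nat_of_le_succ fun n => ?_
  induction n with
  | zero => exact h01
  | succ n ih =>
    have hcoeff :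
        (n + 2) ^ 3 + (n + 1) ^ 3 ≤ 34 * (n + 1) ^ 3 + 51 * (n + 1) ^ 2 + 27 * (n + 1) + 5 := by
      ring_nf; omega
    have h := hf n
    have := Nat.mul_le_mul_right (f (n + 1)) hcoeff
    have := Nat.mul_le_mul_left ((n + 1) ^ 3) ih
    exact le_of_mul_le_mul_left (a := (n + 2) ^ 3) (by linarith) (by positivity)

theorem sq_lt_mul (hf : SatisfiesAperyRecurrence f) (h01 : f 0 ≤ f 1)
    (h012 : f 1 ^ 2 < f 0 * f 2) (n : ℕ) : f (n + 1) ^ 2 < f n * f (n + 2) := by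
  induction n with
  | zero => exact h012
  | succ m ih =>
    have h₁ := hf m
    have h₂ := hf (m + 1)
    zify at ih h₁ h₂ ⊢
    exact sq_lt_mul_of_aperyRecurrence_step (u := (m : ℤ) + 1) (by positivity) (by positivity)
      (by exact_mod_cast hf.monotone h01 m.le_succ) (by positivity) h₁ h₂ ih

end SatisfiesAperyRecurrence

theorem aperyA_strict_log_convex_general (n : ℕ) :
    aperyA n ^ 2 < aperyA (n - 1) * aperyA (n + 1) := by
  rcases n with _ | m
  · decide
  · simpa using satisfiesAperyRecurrence_aperyA.sq_lt_mul (by decide) (by decide) m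

theorem aperyA_strict_log_convex (n : ℕ) (hn : 1 ≤ n) :
    aperyA n ^ 2 < aperyA (n - 1) * aperyA (n + 1) :=
  aperyA_strict_log_convex_general n
end

section
/- For all n ≥ 2, the ratio of consecutive Apéry numbers satisfies A_n / A_{n-1} < P(n), where P(n) = 17 + 12√2 - (51/2 + 18√2)/n + (27/2 + (609/64)√2)/n^2 - (645/256 + (225/128)√2)/n^3. -/
namespace AperyAux

/-- Integer version of the summand. -/
def bb (n k : ℕ) : ℤ := ((n.choose k : ℤ))^2 * (((n+k).choose k : ℤ))^2

/-- The WZ certificate. -/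
def gg (n k : ℕ) : ℤ :=
  4*(2*(n:ℤ)+1)*((k:ℤ)*(2*(k:ℤ)+1) - (2*(n:ℤ)+1)^2) * ((n.choose k : ℤ))^2 * (((n+k).choose k : ℤ))^2

def ff (n : ℕ) : ℕ → ℤ
  | 0 => 0
  | k+1 => gg n k

lemma apery_step (m k : ℕ) (hk : k ≤ m + 2) :
    ((m:ℤ)+2)^3 * bb (m+2) k + ((m:ℤ)+1)^3 * bb m k
      - (34*((m:ℤ)+1)^3 + 51*((m:ℤ)+1)^2 + 27*((m:ℤ)+1) + 5) * bb (m+1) k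
    = ff (m+1) (k+1) - ff (m+1) k := by
  match k, hk with
  | 0, _ =>
    show _ = gg (m+1) 0 - 0
    unfold bb gg
    simp only [Nat.choose_zero_right, Nat.add_zero, Nat.choose_self]
    push_cast
    ring
  | (j+1), hk =>
    show _ = gg (m+1) (j+1) - gg (m+1) j
    rcases (by omega : j ≤ m ∨ j = m + 1) with hjm | rfl
    · -- main case
      obtain ⟨d, rfl⟩ : ∃ d, m = j + d := ⟨m - j, by omega⟩
      unfold bb gg
      rw [show j+d+2+(j+1) = 2*j+d+3 from by omega,
          show j+d+(j+1) = 2*j+d+1 from by omega,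
          show j+d+1+(j+1) = 2*j+d+2 from by omega,
          show j+d+1+j = 2*j+d+1 from by omega]
      -- the eight binomial coefficients
      set a0 : ℤ := ((j+d).choose (j+1) : ℤ) with ha0
      set a1 : ℤ := ((j+d+1).choose (j+1) : ℤ) with ha1
      set a2 : ℤ := ((j+d+2).choose (j+1) : ℤ) with ha2
      set b0 : ℤ := ((2*j+d+1).choose (j+1) : ℤ) with hb0
      set b1 : ℤ := ((2*j+d+2).choose (j+1) : ℤ) with hb1
      set b2 : ℤ := ((2*j+d+3).choose (j+1) : ℤ) with hb2
      set ap : ℤ := ((j+d+1).choose j : ℤ) with hap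
      set bp : ℤ := ((2*j+d+1).choose j : ℤ) with hbp
      -- binomial ratio relations
      have h1 : a1*((j:ℤ)+d+2) = a2*((d:ℤ)+1) := by
        have h := Nat.choose_mul_succ_eq (j+d+1) (j+1)
        rw [show j+d+1+1-(j+1) = d+1 from by omega] at h
        rw [ha1, ha2]; exact_mod_cast h
      have h2 : a0*((j:ℤ)+d+1) = a1*(d:ℤ) := by
        have h := Nat.choose_mul_succ_eq (j+d) (j+1)
        rw [show j+d+1-(j+1) = d from by omega] at h
        rw [ha0, ha1]; exact_mod_cast h
      have h3 : b0*(2*(j:ℤ)+d+2) = b1*((j:ℤ)+d+1) := by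
        have h := Nat.choose_mul_succ_eq (2*j+d+1) (j+1)
        rw [show 2*j+d+1+1-(j+1) = j+d+1 from by omega] at h
        rw [hb0, hb1]
        exact_mod_cast h
      have h4 : b1*(2*(j:ℤ)+d+3) = b2*((j:ℤ)+d+2) := by
        have h := Nat.choose_mul_succ_eq (2*j+d+2) (j+1)
        rw [show 2*j+d+2+1-(j+1) = j+d+2 from by omega] at h
        rw [hb1, hb2]
        exact_mod_cast h
      have h5 : a1*((j:ℤ)+1) = ap*((d:ℤ)+1) := by
        have h := Nat.choose_succ_right_eq (j+d+1) j
        rw [show j+d+1-j = d+1 from by omega] at h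
        rw [ha1, hap]; exact_mod_cast h
      have h6 : b0*((j:ℤ)+1) = bp*((j:ℤ)+d+1) := by
        have h := Nat.choose_succ_right_eq (2*j+d+1) j
        rw [show 2*j+d+1-j = j+d+1 from by omega] at h
        rw [hb0, hbp]; exact_mod_cast h
      -- product relations
      have P1 : (((d:ℤ)+1)*((j:ℤ)+d+2))*(a2*b2) = (((j:ℤ)+d+2)*(2*(j:ℤ)+d+3))*(a1*b1) := by
        linear_combination (-((j:ℤ)+d+2)*b2)*h1 - (((j:ℤ)+d+2)*a1)*h4
      have P2 : (((j:ℤ)+d+1)*(2*(j:ℤ)+d+2))*(a0*b0) = ((d:ℤ)*((j:ℤ)+d+1))*(a1*b1) := by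
        linear_combination ((2*(j:ℤ)+d+2)*b0)*h2 + ((d:ℤ)*a1)*h3
      have P3 : (((d:ℤ)+1)*((j:ℤ)+d+1)*(2*(j:ℤ)+d+2))*(ap*bp)
          = (((j:ℤ)+1)^2*((j:ℤ)+d+1))*(a1*b1) := by
        linear_combination (-((j:ℤ)+d+1)*(2*(j:ℤ)+d+2)*bp)*h5
          - (((j:ℤ)+1)*(2*(j:ℤ)+d+2)*a1)*h6 + (((j:ℤ)+1)^2*a1)*h3
      have P1sq : ((((d:ℤ)+1)*((j:ℤ)+d+2))*(a2*b2))^2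
          = ((((j:ℤ)+d+2)*(2*(j:ℤ)+d+3))*(a1*b1))^2 := by rw [P1]
      have P2sq : ((((j:ℤ)+d+1)*(2*(j:ℤ)+d+2))*(a0*b0))^2
          = (((d:ℤ)*((j:ℤ)+d+1))*(a1*b1))^2 := by rw [P2]
      have P3sq : ((((d:ℤ)+1)*((j:ℤ)+d+1)*(2*(j:ℤ)+d+2))*(ap*bp))^2
          = ((((j:ℤ)+1)^2*((j:ℤ)+d+1))*(a1*b1))^2 := by rw [P3]
      push_cast
      refine mul_left_cancel₀
        (a := ((((d:ℤ)+1)*((j:ℤ)+d+2)*((j:ℤ)+d+1)*(2*(j:ℤ)+d+2))^2)) (by positivity) ?_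
      linear_combination
        ((((j:ℤ)+d+2)^3*(((j:ℤ)+d+1)*(2*(j:ℤ)+d+2))^2)) * P1sq
        + ((((j:ℤ)+d+1)^3*(((d:ℤ)+1)*((j:ℤ)+d+2))^2)) * P2sq
        + (4*(2*((j:ℤ)+d+1)+1)*((j:ℤ)*(2*(j:ℤ)+1)-(2*((j:ℤ)+d+1)+1)^2)*((j:ℤ)+d+2)^2) * P3sq
    · -- boundary case k = m + 2
      unfold bb gg
      rw [show m+2+(m+1+1) = 2*(m+2) from by omega,
          show m+1+(m+1) = 2*(m+1) from by omega,
          show m+1+(m+1+1) = 2*m+3 from by omega,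
          Nat.choose_self,
          show (m+1+1) = (m+1)+1 from rfl, Nat.choose_succ_self,
          Nat.choose_eq_zero_of_lt (by omega : m < m+1+1)]
      have hcb := Nat.succ_mul_centralBinom_succ (m+1)
      unfold Nat.centralBinom at hcb
      rw [show 2*(m+1+1) = 2*(m+2) from by omega] at hcb
      have hcbz : ((m:ℤ)+2) * ((2*(m+2)).choose (m+2) : ℤ)
          = 2*(2*(m:ℤ)+3) * ((2*(m+1)).choose (m+1) : ℤ) := by exact_mod_cast hcb
      push_cast
      simp only [Nat.choose_self, Nat.cast_one, one_pow, mul_one]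
      linear_combination (((m:ℤ)+2)*(((m:ℤ)+2) * ((2*(m+2)).choose (m+2) : ℤ)
        + 2*(2*(m:ℤ)+3) * ((2*(m+1)).choose (m+1) : ℤ))) * hcbz

lemma aperyA_cast (n : ℕ) :
    (aperyA n : ℤ) = ∑ k ∈ Finset.range (n+1), bb n k := by
  unfold aperyA bb
  push_cast
  rfl

lemma apery_rec (m : ℕ) :
    ((m:ℤ)+2)^3 * (aperyA (m+2) : ℤ) + ((m:ℤ)+1)^3 * (aperyA m : ℤ)
      = (34*((m:ℤ)+1)^3 + 51*((m:ℤ)+1)^2 + 27*((m:ℤ)+1) + 5) * (aperyA (m+1) : ℤ) := by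
  have hsum : ∑ k ∈ Finset.range (m+3),
      (((m:ℤ)+2)^3 * bb (m+2) k + ((m:ℤ)+1)^3 * bb m k
        - (34*((m:ℤ)+1)^3 + 51*((m:ℤ)+1)^2 + 27*((m:ℤ)+1) + 5) * bb (m+1) k)
      = ff (m+1) (m+3) - ff (m+1) 0 := by
    rw [← Finset.sum_range_sub (ff (m+1)) (m+3)]
    refine Finset.sum_congr rfl fun k hk => ?_
    exact apery_step m k (by simp only [Finset.mem_range] at hk; omega)
  have hff0 : ff (m+1) 0 = 0 := rfl
  have hfftop : ff (m+1) (m+3) = 0 := by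
    show gg (m+1) (m+2) = 0
    unfold gg
    rw [show m+2 = (m+1)+1 from rfl, Nat.choose_succ_self]
    push_cast
    ring
  rw [hff0, hfftop] at hsum
  rw [Finset.sum_sub_distrib, Finset.sum_add_distrib, ← Finset.mul_sum, ← Finset.mul_sum,
    ← Finset.mul_sum] at hsum
  have e2 : ∑ k ∈ Finset.range (m+3), bb (m+2) k = (aperyA (m+2) : ℤ) := (aperyA_cast (m+2)).symm
  have e1 : ∑ k ∈ Finset.range (m+3), bb (m+1) k = (aperyA (m+1) : ℤ) := by
    rw [Finset.sum_range_succ, aperyA_cast (m+1)]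
    have : bb (m+1) (m+2) = 0 := by
      unfold bb
      rw [show m+2 = (m+1)+1 from rfl, Nat.choose_succ_self]
      push_cast; ring
    rw [this]; ring
  have e0 : ∑ k ∈ Finset.range (m+3), bb m k = (aperyA m : ℤ) := by
    rw [Finset.sum_range_succ, Finset.sum_range_succ, aperyA_cast m]
    have h1 : bb m (m+1) = 0 := by
      unfold bb; rw [Nat.choose_succ_self]; push_cast; ring
    have h2 : bb m (m+2) = 0 := by
      unfold bb
      rw [Nat.choose_eq_zero_of_lt (by omega : m < m+2)]
      push_cast; ring
    rw [h1, h2]; ring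
  rw [e2, e1, e0] at hsum
  linarith [hsum]

lemma aperyA_pos (n : ℕ) : 0 < aperyA n := by
  unfold aperyA
  apply Finset.sum_pos
  · intro k hk
    have hk' : k ≤ n := by simpa [Nat.lt_succ_iff] using hk
    have h1 : 0 < n.choose k := Nat.choose_pos hk'
    have h2 : 0 < (n+k).choose k := Nat.choose_pos (by omega)
    positivity
  · exact ⟨0, by simp⟩

noncomputable def pP (x : ℝ) : ℝ :=
  (17+12*Real.sqrt 2)*x^3 - (51/2+18*Real.sqrt 2)*x^2
    + (27/2+(609/64)*Real.sqrt 2)*x - (645/256+(225/128)*Real.sqrt 2)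

lemma key (x : ℝ) :
    (34*x^3+51*x^2+27*x+5) * pP x - x^6 < pP (x+1) * pP x := by
  have hs2 : Real.sqrt 2 ^ 2 = 2 := Real.sq_sqrt (by norm_num)
  set s := Real.sqrt 2 with hs
  have hid : pP (x+1) * pP x + x^6 - (34*x^3+51*x^2+27*x+5) * pP x
      = (1593/2048)*x^2 - (4005/8192)*s*x + 11025/65536 := by
    unfold pP
    linear_combination ((12*(x+1)^3-18*(x+1)^2+(609/64)*(x+1)-225/128)
      * (12*x^3-18*x^2+(609/64)*x-225/128)) * hs2
  nlinarith [sq_nonneg ((1593/1024)*x - (4005/8192)*s), hs2, hid]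

lemma aux (m : ℕ) :
    (aperyA (m+2) : ℝ) / (aperyA (m+1) : ℝ) < pP ((m:ℝ)+2) / ((m:ℝ)+2)^3 := by
  induction m with
  | zero =>
    have h2 : aperyA 2 = 73 := by decide
    have h1 : aperyA 1 = 5 := by decide
    rw [h2, h1]
    have hs2 : Real.sqrt 2 ^ 2 = 2 := Real.sq_sqrt (by norm_num)
    have hs0 : 0 ≤ Real.sqrt 2 := Real.sqrt_nonneg 2
    unfold pP
    push_cast
    rw [div_lt_div_iff₀ (by norm_num) (by norm_num)]
    nlinarith [hs2, hs0]
  | succ m ih =>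
    set N : ℝ := (m:ℝ)+2 with hN
    have hNpos : (0:ℝ) < N := by positivity
    have hz0 : (0:ℝ) < (aperyA (m+1) : ℝ) := by exact_mod_cast aperyA_pos (m+1)
    have hz1 : (0:ℝ) < (aperyA (m+2) : ℝ) := by exact_mod_cast aperyA_pos (m+2)
    have hz2 : (0:ℝ) < (aperyA (m+3) : ℝ) := by exact_mod_cast aperyA_pos (m+3)
    have hrec : (N+1)^3 * (aperyA (m+3) : ℝ) + N^3 * (aperyA (m+1) : ℝ)
        = (34*N^3+51*N^2+27*N+5) * (aperyA (m+2) : ℝ) := by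
      have h := apery_rec (m+1)
      have hR := congrArg (fun z : ℤ => (z : ℝ)) h
      push_cast at hR
      rw [hN]
      push_cast
      linarith [hR]
    have hIH' : (aperyA (m+2) : ℝ) * N^3 < pP N * (aperyA (m+1) : ℝ) :=
      (div_lt_div_iff₀ hz0 (by positivity)).mp ih
    have hp : 0 < pP N := by
      nlinarith [hIH', mul_pos hz1 (pow_pos hNpos 3), hz0]
    have hkey := key N
    have hgoal : ((m+1:ℕ):ℝ)+2 = N+1 := by rw [hN]; push_cast; ring
    rw [hgoal, div_lt_div_iff₀ hz1 (by positivity)]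
    have h3 : ((aperyA (m+3) : ℝ)*(N+1)^3)*pP N
        = (34*N^3+51*N^2+27*N+5)*(aperyA (m+2):ℝ)*pP N - N^3*(aperyA (m+1):ℝ)*pP N := by
      linear_combination pP N * hrec
    have h4 : N^3*((aperyA (m+2):ℝ)*N^3) < N^3*(pP N * (aperyA (m+1):ℝ)) :=
      mul_lt_mul_of_pos_left hIH' (pow_pos hNpos 3)
    have h5 : (aperyA (m+2):ℝ)*((34*N^3+51*N^2+27*N+5)*pP N - N^6)
        < (aperyA (m+2):ℝ)*(pP (N+1)*pP N) := mul_lt_mul_of_pos_left hkey hz1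
    have h6 : ((aperyA (m+3):ℝ)*(N+1)^3)*pP N < (pP (N+1)*(aperyA (m+2):ℝ))*pP N := by
      nlinarith [h3, h4, h5]
    exact lt_of_mul_lt_mul_right h6 (le_of_lt hp)

end AperyAux

theorem aperyA_ratio_upper_bound (n : ℕ) (hn : 2 ≤ n) :
    (aperyA n : ℝ) / (aperyA (n - 1) : ℝ) <
      17 + 12 * Real.sqrt 2
        - (51 / 2 + 18 * Real.sqrt 2) / (n : ℝ)
        + (27 / 2 + (609 / 64) * Real.sqrt 2) / (n : ℝ) ^ 2
        - (645 / 256 + (225 / 128) * Real.sqrt 2) / (n : ℝ) ^ 3 := by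
  obtain ⟨m, rfl⟩ : ∃ m, n = m + 2 := ⟨n - 2, by omega⟩
  have h := AperyAux.aux m
  have hm : ((m:ℝ)+2) ≠ 0 := by positivity
  have heq : (17 + 12 * Real.sqrt 2
        - (51 / 2 + 18 * Real.sqrt 2) / ((m+2 : ℕ) : ℝ)
        + (27 / 2 + (609 / 64) * Real.sqrt 2) / ((m+2 : ℕ) : ℝ) ^ 2
        - (645 / 256 + (225 / 128) * Real.sqrt 2) / ((m+2 : ℕ) : ℝ) ^ 3)
      = AperyAux.pP ((m:ℝ)+2) / ((m:ℝ)+2)^3 := by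
    unfold AperyAux.pP
    push_cast
    field_simp
  rw [show m + 2 - 1 = m + 1 from rfl, heq]
  exact h
end

section
/- Let S be a positive real sequence with S_n = b(n) S_{n-1} + c(n) S_{n-2} for n ≥ 2 with b(n) > 0, and let g : ℕ → ℝ be positive. Suppose N is a positive integer such that c(n) > 0 for n ≥ N, S_N/S_{N-1} ≤ g_N, S_{N+1}/S_N ≤ g_{N+1}, and for n ≥ N+2, g_n > b(n) + c(n)/(b(n-1) + c(n-1)/g_{n-2}). Then S_n/S_{n-1} ≤ g_n for all n ≥ N. -/
theorem ratio_upper_bound_of_pos_c (S b c g : ℕ → ℝ) (hpos : ∀ m, 0 < S m)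
    (hrec : ∀ n, 2 ≤ n → S n = b n * S (n - 1) + c n * S (n - 2))
    (hb : ∀ n, 0 < b n)
    (hgpos : ∀ n, 0 < g n)
    (N : ℕ) (hN : 1 ≤ N)
    (hc : ∀ n, N ≤ n → 0 < c n)
    (hbase₀ : S N / S (N - 1) ≤ g N)
    (hbase₁ : S (N + 1) / S N ≤ g (N + 1))
    (hstep : ∀ n, N + 2 ≤ n →
      g n > b n + c n / (b (n - 1) + c (n - 1) / g (n - 2))) :
    ∀ n, N ≤ n → S n / S (n - 1) ≤ g n := by
  intro n
  induction n using Nat.strong_induction_on with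
  | _ n ih =>
    intro hn
    rcases eq_or_lt_of_le hn with h | h
    · exact h ▸ hbase₀
    rcases eq_or_lt_of_le (Nat.succ_le_of_lt h) with h1 | h1
    · subst h1; simpa using hbase₁
    have hn2 : N + 2 ≤ n := h1
    obtain ⟨m, rfl⟩ : ∃ m, n = m + 3 := ⟨n - 3, by omega⟩
    have hm1 : N ≤ m + 1 := by omega
    have ihr : S (m + 1) / S m ≤ g (m + 1) := by
      have := ih (m + 1) (by omega) hm1
      simpa using this
    have hS := fun k => hpos k
    have rec2 : S (m + 2) = b (m + 2) * S (m + 1) + c (m + 2) * S m := by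
      have := hrec (m + 2) (by omega); simpa using this
    have rec3 : S (m + 3) = b (m + 3) * S (m + 2) + c (m + 3) * S (m + 1) := by
      have := hrec (m + 3) (by omega); simpa using this
    have hc2 : 0 < c (m + 2) := hc _ (by omega)
    have hc3 : 0 < c (m + 3) := hc _ (by omega)
    have hg1 : 0 < g (m + 1) := hgpos _
    -- lower bound on S(m+2)/S(m+1)
    have hinv : 1 / g (m + 1) ≤ S m / S (m + 1) := by
      rw [div_le_div_iff₀ hg1 (hS (m + 1)), one_mul]
      rw [div_le_iff₀ (hS m)] at ihr
      linarith [ihr]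
    have hD : b (m + 2) + c (m + 2) / g (m + 1) ≤ S (m + 2) / S (m + 1) := by
      have : S (m + 2) / S (m + 1) = b (m + 2) + c (m + 2) * (S m / S (m + 1)) := by
        rw [rec2, add_div, mul_div_cancel_right₀ _ (hS (m + 1)).ne', mul_div_assoc]
      rw [this]
      have : c (m + 2) / g (m + 1) ≤ c (m + 2) * (S m / S (m + 1)) := by
        calc c (m + 2) / g (m + 1) = c (m + 2) * (1 / g (m + 1)) := by ring
          _ ≤ c (m + 2) * (S m / S (m + 1)) := by
              exact mul_le_mul_of_nonneg_left hinv hc2.le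
      linarith
    have hDpos : 0 < b (m + 2) + c (m + 2) / g (m + 1) :=
      add_pos (hb _) (div_pos hc2 hg1)
    have hr2pos : 0 < S (m + 2) / S (m + 1) := div_pos (hS _) (hS _)
    -- upper bound on S(m+1)/S(m+2)
    have hinv2 : S (m + 1) / S (m + 2) ≤ 1 / (b (m + 2) + c (m + 2) / g (m + 1)) := by
      rw [show S (m + 1) / S (m + 2) = 1 / (S (m + 2) / S (m + 1)) from (one_div_div _ _).symm]
      exact one_div_le_one_div_of_le hDpos hD
    have key : S (m + 3) / S (m + 2) ≤
        b (m + 3) + c (m + 3) / (b (m + 2) + c (m + 2) / g (m + 1)) := by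
      have heq : S (m + 3) / S (m + 2) = b (m + 3) + c (m + 3) * (S (m + 1) / S (m + 2)) := by
        rw [rec3, add_div, mul_div_cancel_right₀ _ (hS (m + 2)).ne', mul_div_assoc]
      rw [heq]
      have : c (m + 3) * (S (m + 1) / S (m + 2)) ≤
          c (m + 3) / (b (m + 2) + c (m + 2) / g (m + 1)) := by
        calc c (m + 3) * (S (m + 1) / S (m + 2))
            ≤ c (m + 3) * (1 / (b (m + 2) + c (m + 2) / g (m + 1))) :=
              mul_le_mul_of_nonneg_left hinv2 hc3.le
          _ = c (m + 3) / (b (m + 2) + c (m + 2) / g (m + 1)) := by ring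
      linarith
    have hstep' := hstep (m + 3) (by omega)
    simp only [show m + 3 - 1 = m + 2 from rfl, show m + 3 - 2 = m + 1 from rfl] at hstep'
    have : (m + 3 : ℕ) - 1 = m + 2 := rfl
    rw [this]
    linarith
end

section
/- The sequence of Apéry numbers B_n is strictly 2-log-convex: for all n ≥ 1, (B_{n-1} B_{n+1} - B_n^2)(B_{n+1} B_{n+3} - B_{n+2}^2) > (B_n B_{n+2} - B_{n+1}^2)^2. -/
open Finset Real

namespace Nat

variable {R : Type*} [CommRing R]

theorem cast_choose_succ_right_mul (n k : ℕ) :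
    (n.choose (k + 1) : R) * (k + 1) = n.choose k * (n - k) := by
  rcases le_or_gt k n with hkn | hnk
  · have h := congrArg (Nat.cast : ℕ → R) (n.choose_succ_right_eq k)
    push_cast [Nat.cast_sub hkn] at h
    exact h
  · simp [choose_eq_zero_of_lt hnk, choose_eq_zero_of_lt (hnk.trans (lt_add_one k))]

theorem cast_choose_mul_succ (n k : ℕ) :
    (n.choose k : R) * (n + 1) = (n + 1).choose k * (n + 1 - k) := by
  rcases le_or_gt k (n + 1) with hkn | hnk
  · have h := congrArg (Nat.cast : ℕ → R) (n.choose_mul_succ_eq k)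
    push_cast [Nat.cast_sub hkn] at h
    exact h
  · simp [choose_eq_zero_of_lt hnk, choose_eq_zero_of_lt ((lt_add_one n).trans hnk)]

end Nat

namespace Apery

def term (n k : ℕ) : ℚ := (n.choose k : ℚ) ^ 2 * (n + k).choose k

/-- Zeilberger's certificate for the recurrence of `aperyB`. -/
def certificate (n k : ℕ) : ℚ :=
  ((n + 2).choose k : ℚ) ^ 2 * (n + k).choose k * k ^ 3 *
    (k ^ 2 + (6 * n + 7) * k - (11 * n + 15) * (n + 2)) / ((n + 1) * (n + 2) ^ 2)

theorem recurrence_term_eq_certificate_sub (n k : ℕ) :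
    ((n : ℚ) + 2) ^ 2 * term (n + 2) k - (11 * n ^ 2 + 33 * n + 25) * term (n + 1) k
      - ((n : ℚ) + 1) ^ 2 * term n k = certificate n (k + 1) - certificate n k := by
  have hn₁ : (n : ℚ) + 1 ≠ 0 := by positivity
  have hn₂ : (n : ℚ) + 2 ≠ 0 := by positivity
  have hk₁ : (k : ℚ) + 1 ≠ 0 := by positivity
  have e₀ : (n.choose k : ℚ) = (n + 1).choose k * (n + 1 - k) / (n + 1) := by
    have h := Nat.cast_choose_mul_succ (R := ℚ) n k
    rw [eq_div_iff hn₁]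
    linear_combination h
  have e₁ : ((n + 1).choose k : ℚ) = (n + 2).choose k * (n + 2 - k) / (n + 2) := by
    have h := Nat.cast_choose_mul_succ (R := ℚ) (n + 1) k
    push_cast at h
    rw [eq_div_iff hn₂]
    linear_combination h
  have e₂ : ((n + 2).choose (k + 1) : ℚ) = (n + 2).choose k * (n + 2 - k) / (k + 1) := by
    have h := Nat.cast_choose_succ_right_mul (R := ℚ) (n + 2) k
    push_cast at h
    rw [eq_div_iff hk₁]
    linear_combination h
  have f₁ : ((n + 1 + k).choose k : ℚ) = (n + k).choose k * (n + k + 1) / (n + 1) := by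
    have h := Nat.cast_choose_mul_succ (R := ℚ) (n + k) k
    rw [show n + k + 1 = n + 1 + k by ring] at h
    push_cast at h
    rw [eq_div_iff hn₁]
    linear_combination -h
  have f₂ : ((n + 2 + k).choose k : ℚ) = (n + 1 + k).choose k * (n + k + 2) / (n + 2) := by
    have h := Nat.cast_choose_mul_succ (R := ℚ) (n + 1 + k) k
    rw [show n + 1 + k + 1 = n + 2 + k by ring] at h
    push_cast at h
    rw [eq_div_iff hn₂]
    linear_combination -h
  have f₃ : ((n + (k + 1)).choose (k + 1) : ℚ) = (n + 1 + k).choose k * (n + 1) / (k + 1) := by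
    have h := Nat.cast_choose_succ_right_mul (R := ℚ) (n + 1 + k) k
    push_cast at h
    rw [show n + (k + 1) = n + 1 + k by ring, eq_div_iff hk₁]
    linear_combination h
  simp only [term, certificate]
  rw [e₀, e₁, e₂, f₂, f₃, f₁]
  push_cast
  field_simp
  ring

theorem cast_aperyB_eq_sum_term {n m : ℕ} (h : n < m) :
    (aperyB n : ℚ) = ∑ k ∈ range m, term n k := by
  simp only [aperyB, term]
  push_cast
  refine sum_subset (range_subset_range.2 h) fun k _ hk => ?_
  simp [Nat.choose_eq_zero_of_lt (show n < k by simpa using hk)]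

theorem aperyB_recurrence (n : ℕ) :
    (n + 2) ^ 2 * aperyB (n + 2) = (11 * n ^ 2 + 33 * n + 25) * aperyB (n + 1)
      + (n + 1) ^ 2 * aperyB n := by
  have htelescope := sum_range_sub (certificate n) (n + 3)
  rw [← sum_congr rfl fun k _ => recurrence_term_eq_certificate_sub n k] at htelescope
  simp only [sum_sub_distrib, ← mul_sum, ← cast_aperyB_eq_sum_term (show n + 2 < n + 3 by omega),
    ← cast_aperyB_eq_sum_term (show n + 1 < n + 3 by omega),
    ← cast_aperyB_eq_sum_term (show n < n + 3 by omega)] at htelescope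
  have hlast : certificate n (n + 3) = 0 := by simp [certificate]
  have hfirst : certificate n 0 = 0 := by simp [certificate]
  rw [hlast, hfirst] at htelescope
  have h : ((n + 2) ^ 2 * aperyB (n + 2) : ℚ)
      = (11 * n ^ 2 + 33 * n + 25) * aperyB (n + 1) + (n + 1) ^ 2 * aperyB n := by
    linear_combination htelescope
  exact_mod_cast h

theorem aperyB_pos (n : ℕ) : 0 < aperyB n :=
  sum_pos' (fun _ _ => Nat.zero_le _) ⟨0, by simp, by simp⟩

noncomputable def ratio (n : ℕ) : ℝ := aperyB (n + 1) / aperyB n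

noncomputable def ratioStep (n : ℕ) (r : ℝ) : ℝ :=
  (11 * n ^ 2 + 33 * n + 25 + (n + 1) ^ 2 / r) / (n + 2) ^ 2

theorem ratio_succ (n : ℕ) : ratio (n + 1) = ratioStep n (ratio n) := by
  have hB₀ : (aperyB n : ℝ) ≠ 0 := by exact_mod_cast (aperyB_pos n).ne'
  have hB₁ : (aperyB (n + 1) : ℝ) ≠ 0 := by exact_mod_cast (aperyB_pos (n + 1)).ne'
  have hrec : ((n + 2) ^ 2 * aperyB (n + 1 + 1) : ℝ)
      = (11 * n ^ 2 + 33 * n + 25) * aperyB (n + 1) + (n + 1) ^ 2 * aperyB n := by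
    exact_mod_cast aperyB_recurrence n
  simp only [ratio, ratioStep]
  field_simp
  linear_combination hrec

theorem ratioStep_le_ratioStep (n : ℕ) {r r' : ℝ} (hr : 0 < r) (h : r ≤ r') :
    ratioStep n r' ≤ ratioStep n r := by
  unfold ratioStep
  gcongr

/-- `(11 + 5√5) / 2` is the dominant root of `t² = 11t + 1`, the limit of `ratio n`, and
`lowerPoly x / x⁵` is the expansion of `ratio (x - 1)` in powers of `1 / x` up to order `x⁻⁴`. -/
noncomputable def lowerPoly (x : ℝ) : ℝ :=
  (11 + 5 * √5) / 2 * (x ^ 5 - x ^ 4) + (3 / 2 + 7 / 10 * √5) * x ^ 3 + x ^ 2 / 25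
    + (1 / 50 + 23 / 1250 * √5) * x

noncomputable def ratioLower (n : ℕ) : ℝ := lowerPoly (n + 1) / (n + 1) ^ 5

noncomputable def ratioUpper (n : ℕ) : ℝ := ratioLower n + 1 / (5 * (n + 1) ^ 5)

theorem sqrt_five_sq : √5 ^ 2 = 5 := sq_sqrt (by norm_num)

theorem sqrt_five_pow_three : √5 ^ 3 = 5 * √5 := by rw [pow_succ, sqrt_five_sq]

theorem lowerPoly_pos (j : ℕ) : 0 < lowerPoly (j + 3) := by
  simp only [lowerPoly]
  ring_nf
  positivity

theorem ratioLower_pos (j : ℕ) : 0 < ratioLower (j + 2) := by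
  have h := lowerPoly_pos j
  unfold ratioLower
  push_cast
  rw [show (j : ℝ) + 2 + 1 = j + 3 by ring]
  positivity

theorem ratioLower_le_ratioStep_ratioUpper (j : ℕ) :
    ratioLower (j + 3) ≤ ratioStep (j + 2) (ratioUpper (j + 2)) := by
  have hj : (0 : ℝ) ≤ j := j.cast_nonneg
  have hs : √5 ≤ 9 / 4 := by rw [sqrt_le_left (by norm_num)]; norm_num
  have h := lowerPoly_pos j
  simp only [ratioLower, ratioUpper, ratioStep]
  push_cast
  rw [show (j : ℝ) + 2 + 1 = j + 3 by ring]
  field_simp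
  simp only [lowerPoly]
  ring_nf
  simp only [sqrt_five_sq]
  ring_nf
  -- the coefficients of `√5 * j ^ i` are negative; by `√5 ≤ 9 / 4` those of `j ^ i` absorb them
  nlinarith [hs, hj, pow_nonneg hj 2, pow_nonneg hj 3, pow_nonneg hj 4, pow_nonneg hj 5,
    pow_nonneg hj 6, pow_nonneg hj 7]

theorem ratioStep_ratioLower_le_ratioUpper (j : ℕ) :
    ratioStep (j + 2) (ratioLower (j + 2)) ≤ ratioUpper (j + 3) := by
  have h := lowerPoly_pos j
  simp only [ratioLower, ratioUpper, ratioStep]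
  push_cast
  rw [show (j : ℝ) + 2 + 1 = j + 3 by ring, ← sub_nonneg]
  field_simp
  simp only [lowerPoly]
  ring_nf
  simp only [sqrt_five_sq]
  ring_nf
  positivity

theorem ratioUpper_lt_ratioLower_succ (j : ℕ) : ratioUpper (j + 2) < ratioLower (j + 3) := by
  simp only [ratioLower, ratioUpper]
  push_cast
  rw [← sub_pos]
  field_simp
  simp only [lowerPoly]
  ring_nf
  positivity

theorem ratioUpper_mul_sq_sub_lt (j : ℕ) :
    ratioUpper (j + 2) * (ratioUpper (j + 4) - ratioLower (j + 3)) ^ 2 <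
      ratioLower (j + 4) * (ratioLower (j + 3) - ratioUpper (j + 2)) *
        (ratioLower (j + 5) - ratioUpper (j + 4)) := by
  simp only [ratioLower, ratioUpper]
  push_cast
  rw [← sub_pos]
  field_simp
  simp only [lowerPoly]
  ring_nf
  simp only [sqrt_five_sq, sqrt_five_pow_three]
  ring_nf
  positivity

theorem ratio_two_mem_bounds : ratioLower 2 ≤ ratio 2 ∧ ratio 2 ≤ ratioUpper 2 := by
  have hs₁ : 2.236 < √5 := by rw [lt_sqrt (by norm_num)]; norm_num
  have hs₂ : √5 < 2.2361 := by rw [sqrt_lt' (by norm_num)]; norm_num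
  have h2 : aperyB 2 = 19 := by decide
  have h3 : aperyB 3 = 147 := by decide
  simp only [ratio, ratioLower, ratioUpper, lowerPoly, h2, h3]
  norm_num
  constructor <;> linarith

theorem ratio_mem_bounds (j : ℕ) :
    ratioLower (j + 2) ≤ ratio (j + 2) ∧ ratio (j + 2) ≤ ratioUpper (j + 2) := by
  induction j with
  | zero => exact ratio_two_mem_bounds
  | succ j ih =>
    obtain ⟨hlo, hhi⟩ := ih
    rw [ratio_succ]
    exact ⟨(ratioLower_le_ratioStep_ratioUpper j).trans
        (ratioStep_le_ratioStep _ ((ratioLower_pos j).trans_le hlo) hhi),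
      (ratioStep_le_ratioStep _ (ratioLower_pos j) hlo).trans
        (ratioStep_ratioLower_le_ratioUpper j)⟩

end Apery

section RatioCriterion

variable {r L U : ℕ → ℝ}

theorem mul_sq_sub_lt_of_bounds (hL : ∀ i, L i ≤ r i) (hU : ∀ i, r i ≤ U i)
    (hL₀ : ∀ i, 0 ≤ L i) (hsep : ∀ i, U i < L (i + 1)) (n : ℕ)
    (h : U n * (U (n + 2) - L (n + 1)) ^ 2 <
      L (n + 2) * (L (n + 1) - U n) * (L (n + 3) - U (n + 2))) :
    r n * (r (n + 2) - r (n + 1)) ^ 2 <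
      r (n + 2) * (r (n + 1) - r n) * (r (n + 3) - r (n + 2)) := by
  have hr₀ : 0 ≤ r n := (hL₀ n).trans (hL n)
  have hr₂ : 0 ≤ r (n + 2) := (hL₀ _).trans (hL _)
  have hLU₀ : 0 ≤ L (n + 1) - U n := by linarith [hsep n]
  have hLU₂ : 0 ≤ L (n + 3) - U (n + 2) := by linarith [hsep (n + 2)]
  have hr₀₁ : 0 ≤ r (n + 1) - r n := by linarith [hL (n + 1), hU n]
  have hr₁₂ : 0 ≤ r (n + 2) - r (n + 1) := by linarith [hsep (n + 1), hL (n + 2), hU (n + 1)]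
  calc r n * (r (n + 2) - r (n + 1)) ^ 2
      ≤ U n * (U (n + 2) - L (n + 1)) ^ 2 := by
        gcongr
        exacts [hr₀.trans (hU n), hU n, hU (n + 2), hL (n + 1)]
    _ < L (n + 2) * (L (n + 1) - U n) * (L (n + 3) - U (n + 2)) := h
    _ ≤ r (n + 2) * (r (n + 1) - r n) * (r (n + 3) - r (n + 2)) := by
        gcongr
        exacts [hL (n + 2), hL (n + 1), hU n, hL (n + 3), hU (n + 2)]

theorem sq_sub_mul_lt_of_ratio {b : ℕ → ℝ} (hb : ∀ k, 0 < b k) (hr : ∀ k, r k = b (k + 1) / b k)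
    {n : ℕ} (h : r n * (r (n + 2) - r (n + 1)) ^ 2 <
      r (n + 2) * (r (n + 1) - r n) * (r (n + 3) - r (n + 2))) :
    (b (n + 1) * b (n + 3) - b (n + 2) ^ 2) ^ 2 <
      (b n * b (n + 2) - b (n + 1) ^ 2) * (b (n + 2) * b (n + 4) - b (n + 3) ^ 2) := by
  have h₀ := (hb n).ne'
  have h₁ := (hb (n + 1)).ne'
  have h₂ := (hb (n + 2)).ne'
  have h₃ := (hb (n + 3)).ne'
  simp only [hr] at h
  have hc : 0 < b n * b (n + 1) * b (n + 2) ^ 2 := mul_pos (mul_pos (hb n) (hb _)) (pow_pos (hb _) 2)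
  calc (b (n + 1) * b (n + 3) - b (n + 2) ^ 2) ^ 2
      = b n * b (n + 1) * b (n + 2) ^ 2 * (b (n + 1) / b n *
          (b (n + 3) / b (n + 2) - b (n + 2) / b (n + 1)) ^ 2) := by
        field_simp
    _ < b n * b (n + 1) * b (n + 2) ^ 2 * (b (n + 3) / b (n + 2) *
          (b (n + 2) / b (n + 1) - b (n + 1) / b n) *
          (b (n + 4) / b (n + 3) - b (n + 3) / b (n + 2))) := mul_lt_mul_of_pos_left h hc
    _ = (b n * b (n + 2) - b (n + 1) ^ 2) * (b (n + 2) * b (n + 4) - b (n + 3) ^ 2) := by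
        field_simp

end RatioCriterion

theorem aperyB_strict_two_log_convex (n : ℕ) (hn : 1 ≤ n) :
    ((aperyB (n - 1) : ℤ) * aperyB (n + 1) - (aperyB n : ℤ) ^ 2) *
        ((aperyB (n + 1) : ℤ) * aperyB (n + 3) - (aperyB (n + 2) : ℤ) ^ 2) >
      ((aperyB n : ℤ) * aperyB (n + 2) - (aperyB (n + 1) : ℤ) ^ 2) ^ 2 := by
  obtain rfl | rfl | ⟨m, rfl⟩ : n = 1 ∨ n = 2 ∨ ∃ m, n = m + 3 :=
    by rcases n with _ | _ | _ | m <;> simp_all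
  · decide
  · decide
  have hratio := mul_sq_sub_lt_of_bounds (r := fun j => Apery.ratio (j + 2))
    (fun j => (Apery.ratio_mem_bounds j).1) (fun j => (Apery.ratio_mem_bounds j).2)
    (fun j => (Apery.ratioLower_pos j).le) Apery.ratioUpper_lt_ratioLower_succ m
    (Apery.ratioUpper_mul_sq_sub_lt m)
  have key := sq_sub_mul_lt_of_ratio (b := fun k => (aperyB k : ℝ))
    (fun k => by exact_mod_cast Apery.aperyB_pos k) (fun k => rfl) hratio
  simp only [show m + 3 - 1 = m + 2 by omega]
  exact_mod_cast key
end

section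
/- The Cohen–Rhin sequence U_n defined by U_0 = 1, U_1 = 12, and (n+1)^5 U_{n+1} = 3(2n+1)(3n^2+3n+1)(15n^2+15n+4) U_n + 3n^3(3n-1)(3n+1) U_{n-1} is strictly log-convex: U_n^2 < U_{n-1} U_{n+1} for all n ≥ 1. -/
set_option maxHeartbeats 1000000

noncomputable def crR (x : ℝ) : ℝ :=
  3 * (2 * x + 1) * (3 * x ^ 2 + 3 * x + 1) * (15 * x ^ 2 + 15 * x + 4) / (x + 1) ^ 5

noncomputable def crG (x : ℝ) : ℝ :=
  3 * x ^ 3 * (3 * x - 1) * (3 * x + 1) / (x + 1) ^ 5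

lemma crR_le_270 (x : ℝ) (hx : 0 ≤ x) : crR x ≤ 270 := by
  rw [crR, div_le_iff₀ (by positivity)]
  nlinarith [pow_nonneg hx 2, pow_nonneg hx 3, pow_nonneg hx 4, pow_nonneg hx 5]

lemma crR_lb202 (x : ℝ) (hx : 9 ≤ x) : 202 ≤ crR x := by
  have h9 : (0:ℝ) ≤ x - 9 := by linarith
  rw [crR, le_div_iff₀ (by positivity)]
  nlinarith [pow_nonneg h9 2, pow_nonneg h9 3, pow_nonneg h9 4, pow_nonneg h9 5]

lemma crR_lb208 (x : ℝ) (hx : 10 ≤ x) : 208 ≤ crR x := by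
  have h9 : (0:ℝ) ≤ x - 10 := by linarith
  rw [crR, le_div_iff₀ (by positivity)]
  nlinarith [pow_nonneg h9 2, pow_nonneg h9 3, pow_nonneg h9 4, pow_nonneg h9 5]

lemma crG_pos (x : ℝ) (hx : 1 ≤ x) : 0 < crG x := by
  have h0 : (0:ℝ) < x := by linarith
  rw [crG]
  apply div_pos
  · have p1 : (0:ℝ) < 3 * x ^ 3 := by positivity
    have p2 : (0:ℝ) < 3 * x - 1 := by linarith
    have p3 : (0:ℝ) < 3 * x + 1 := by linarith
    exact mul_pos (mul_pos p1 p2) p3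
  · positivity

lemma crG_le27 (x : ℝ) (hx : 0 ≤ x) : crG x ≤ 27 := by
  rw [crG, div_le_iff₀ (by positivity)]
  nlinarith [pow_nonneg hx 2, pow_nonneg hx 3, pow_nonneg hx 4, pow_nonneg hx 5]

lemma cr_dr_lb (x : ℝ) (hx : 10 ≤ x) : crR x + 100 / (x + 1) ^ 2 ≤ crR (x + 1) := by
  have h0 : (0:ℝ) ≤ x - 10 := by linarith
  have d1 : (0:ℝ) < (x + 1) ^ 5 := by positivity
  have d2 : (0:ℝ) < (x + 1) ^ 2 := by positivity
  have d3 : (0:ℝ) < (x + 1 + 1) ^ 5 := by positivity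
  rw [crR, crR, div_add_div _ _ (ne_of_gt d1) (ne_of_gt d2), div_le_div_iff₀ (by positivity) d3]
  nlinarith [pow_nonneg h0 2, pow_nonneg h0 3, pow_nonneg h0 4, pow_nonneg h0 5,
    pow_nonneg h0 6, pow_nonneg h0 7, pow_nonneg h0 8, pow_nonneg h0 9,
    pow_nonneg h0 10, pow_nonneg h0 11, pow_nonneg h0 12]

lemma cr_dr_ub (x : ℝ) (hx : 10 ≤ x) : crR (x + 1) ≤ crR x + 2000 / (x + 1) ^ 2 := by
  have h0 : (0:ℝ) ≤ x - 10 := by linarith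
  have d1 : (0:ℝ) < (x + 1) ^ 5 := by positivity
  have d2 : (0:ℝ) < (x + 1) ^ 2 := by positivity
  have d3 : (0:ℝ) < (x + 1 + 1) ^ 5 := by positivity
  rw [crR, crR, div_add_div _ _ (ne_of_gt d1) (ne_of_gt d2), div_le_div_iff₀ d3 (by positivity)]
  nlinarith [pow_nonneg h0 2, pow_nonneg h0 3, pow_nonneg h0 4, pow_nonneg h0 5,
    pow_nonneg h0 6, pow_nonneg h0 7, pow_nonneg h0 8, pow_nonneg h0 9,
    pow_nonneg h0 10, pow_nonneg h0 11, pow_nonneg h0 12]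

lemma cr_dg_lb (x : ℝ) (hx : 1 ≤ x) : crG x ≤ crG (x + 1) := by
  have h0 : (0:ℝ) ≤ x - 1 := by linarith
  have d1 : (0:ℝ) < (x + 1) ^ 5 := by positivity
  have d3 : (0:ℝ) < (x + 1 + 1) ^ 5 := by positivity
  rw [crG, crG, div_le_div_iff₀ d1 d3]
  nlinarith [pow_nonneg h0 2, pow_nonneg h0 3, pow_nonneg h0 4, pow_nonneg h0 5,
    pow_nonneg h0 6, pow_nonneg h0 7, pow_nonneg h0 8, pow_nonneg h0 9,
    pow_nonneg h0 10]

lemma cr_dg_ub (x : ℝ) (hx : 10 ≤ x) : crG (x + 1) ≤ crG x + 300 / (x + 1) ^ 2 := by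
  have h0 : (0:ℝ) ≤ x - 10 := by linarith
  have d1 : (0:ℝ) < (x + 1) ^ 5 := by positivity
  have d2 : (0:ℝ) < (x + 1) ^ 2 := by positivity
  have d3 : (0:ℝ) < (x + 1 + 1) ^ 5 := by positivity
  rw [crG, crG, div_add_div _ _ (ne_of_gt d1) (ne_of_gt d2), div_le_div_iff₀ d3 (by positivity)]
  nlinarith [pow_nonneg h0 2, pow_nonneg h0 3, pow_nonneg h0 4, pow_nonneg h0 5,
    pow_nonneg h0 6, pow_nonneg h0 7, pow_nonneg h0 8, pow_nonneg h0 9,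
    pow_nonneg h0 10, pow_nonneg h0 11, pow_nonneg h0 12]

lemma cr_step (u v w r r' g g' K2 K2' : ℝ)
    (hu : 0 < u) (hv : 202 * u < v)
    (hr208 : 208 ≤ r) (hr270 : r ≤ 270) (hr270' : r' ≤ 270)
    (hg0 : 0 < g) (hg27 : g ≤ 27)
    (hdg0 : g ≤ g') (hdg : g' - g ≤ 3 / 40 * K2')
    (hdrl : K2' / 40 ≤ r' - r) (hdru : r' - r ≤ K2' / 2)
    (hK0 : 0 < K2') (hK40 : K2 ≤ 40) (hKK : K2' ≤ K2) (hK12 : K2 ≤ 121 / 100 * K2')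
    (hw : w = r * v + g * u)
    (hA : v ^ 2 < r * v * u + g * u ^ 2)
    (hB : (v + K2 * u) ^ 2 > r * (v + K2 * u) * u + g * u ^ 2) :
    w ^ 2 < r' * w * v + g' * v ^ 2 ∧
      (w + K2' * v) ^ 2 > r' * (w + K2' * v) * v + g' * v ^ 2 := by
  have hK0' : 0 < K2 := lt_of_lt_of_le hK0 hKK
  have hv0 : 0 < v := by nlinarith
  have h271 : v < 271 * u := by
    nlinarith [mul_pos hu hv0, mul_pos hu hu, mul_pos hv0 hv0]
  have hX : 0 < r * v * u + g * u ^ 2 - v ^ 2 := by linarith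
  have hXub : r * v * u + g * u ^ 2 - v ^ 2 < K2 * u * (2 * v + K2 * u - r * u) := by
    nlinarith [hB]
  have hK2u : K2 * u ≤ 40 * u := by nlinarith
  have hru : 208 * u ≤ r * u := by nlinarith
  have hstep1 : 2 * v + K2 * u - r * u ≤ 582 * u := by linarith
  have hXb : r * v * u + g * u ^ 2 - v ^ 2 ≤ 582 * K2 * u ^ 2 := by
    nlinarith [mul_pos hK0' hu, hstep1, hXub]
  have hgX : g * (r * v * u + g * u ^ 2 - v ^ 2) ≤ 27 * (582 * K2 * u ^ 2) := by
    have h1 : g * (r * v * u + g * u ^ 2 - v ^ 2) ≤ 27 * (r * v * u + g * u ^ 2 - v ^ 2) :=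
      mul_le_mul_of_nonneg_right hg27 hX.le
    nlinarith [h1, hXb]
  have hK1221 : 27 * (582 * K2 * u ^ 2) ≤ 19014 * (K2' * u ^ 2) := by
    nlinarith [mul_pos hu hu, hK12]
  have hw208 : 208 * v ≤ w := by
    rw [hw]
    nlinarith [mul_nonneg (by linarith : (0:ℝ) ≤ r - 208) hv0.le, mul_pos hg0 hu]
  have hv2 : 40804 * u ^ 2 < v ^ 2 := by
    nlinarith [mul_pos (show (0:ℝ) < v - 202 * u by linarith)
      (show (0:ℝ) < v + 202 * u by positivity)]
  have hwv : 8487232 * u ^ 2 < w * v := by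
    nlinarith [mul_nonneg (by linarith : (0:ℝ) ≤ w - 208 * v) hv0.le, hv2]
  have hdrwv : K2' / 40 * (8487232 * u ^ 2) ≤ (r' - r) * (w * v) := by
    nlinarith [mul_pos hK0 (mul_pos hu hu), hwv, hdrl,
      mul_nonneg (by linarith : (0:ℝ) ≤ r' - r - K2' / 40) (by nlinarith : (0:ℝ) ≤ w * v)]
  have hKu2 : 0 < K2' * u ^ 2 := by positivity
  have hid : w ^ 2 - r' * w * v - g' * v ^ 2 =
      g * (r * v * u + g * u ^ 2 - v ^ 2) - (r' - r) * (w * v) - (g' - g) * v ^ 2 := by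
    rw [hw]; ring
  have hdgv : 0 ≤ (g' - g) * v ^ 2 := mul_nonneg (by linarith) (sq_nonneg v)
  constructor
  · linarith [hid, hgX, hK1221, hdrwv, hdgv, hKu2]
  · -- B'
    have hgu : g * u ≤ 27 * u := by nlinarith
    have hwub : w ≤ 270 * v + 27 * u := by
      rw [hw]
      nlinarith [mul_nonneg (by linarith : (0:ℝ) ≤ 270 - r) hv0.le]
    have hwub2 : w ≤ (270 + 27 / 202) * v := by linarith
    have hwv0 : (0:ℝ) ≤ w * v := by nlinarith
    have hwvub : w * v ≤ (270 + 27 / 202) * v ^ 2 := by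
      nlinarith [mul_le_mul_of_nonneg_right hwub2 hv0.le]
    have hdr_term : (r' - r) * (w * v) ≤ K2' / 2 * ((270 + 27 / 202) * v ^ 2) := by
      calc (r' - r) * (w * v) ≤ K2' / 2 * (w * v) :=
            mul_le_mul_of_nonneg_right hdru hwv0
        _ ≤ K2' / 2 * ((270 + 27 / 202) * v ^ 2) :=
            mul_le_mul_of_nonneg_left hwvub (by linarith)
    have hdg_term : (g' - g) * v ^ 2 ≤ 3 / 40 * K2' * v ^ 2 :=
      mul_le_mul_of_nonneg_right hdg (sq_nonneg v)
    have a1 : (0:ℝ) ≤ K2' * v := mul_nonneg hK0.le hv0.le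
    have a2 : r' * v ≤ 270 * v := mul_le_mul_of_nonneg_right hr270' hv0.le
    have hlin : 146 * v ≤ 2 * w + K2' * v - r' * v := by linarith
    have hK_term : 146 * (K2' * v ^ 2) ≤ K2' * v * (2 * w + K2' * v - r' * v) := by
      have h := mul_le_mul_of_nonneg_left hlin a1
      linarith [h]
    have hid2 : (w + K2' * v) ^ 2 - r' * (w + K2' * v) * v - g' * v ^ 2 =
        (g * (r * v * u + g * u ^ 2 - v ^ 2) - (r' - r) * (w * v) - (g' - g) * v ^ 2)
          + K2' * v * (2 * w + K2' * v - r' * v) := by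
      rw [hw]; ring
    have hgX0 : 0 < g * (r * v * u + g * u ^ 2 - v ^ 2) := mul_pos hg0 hX
    have hKv2 : 0 < K2' * v ^ 2 := by positivity
    linarith [hid2, hgX0, hdr_term, hdg_term, hK_term, hKv2]

theorem cohenRhin_strict_log_convex (U : ℕ → ℝ)
    (h0 : U 0 = 1) (h1 : U 1 = 12)
    (hrec : ∀ n : ℕ, 1 ≤ n →
      U (n + 1) =
        (3 * (2 * (n : ℝ) + 1) * (3 * (n : ℝ) ^ 2 + 3 * (n : ℝ) + 1)
            * (15 * (n : ℝ) ^ 2 + 15 * (n : ℝ) + 4) / ((n : ℝ) + 1) ^ 5) * U n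
          + (3 * (n : ℝ) ^ 3 * (3 * (n : ℝ) - 1) * (3 * (n : ℝ) + 1)
            / ((n : ℝ) + 1) ^ 5) * U (n - 1)) :
    ∀ n : ℕ, 1 ≤ n → U n ^ 2 < U (n - 1) * U (n + 1) := by
  have e2 : U 2 = 804 := by
    have h := hrec 1 (by norm_num)
    norm_num [h0, h1] at h
    linarith
  have e3 : U 3 = 88680 := by
    have h := hrec 2 (by norm_num)
    norm_num [h1, e2] at h
    linarith
  have e4 : U 4 = 12386340 := by
    have h := hrec 3 (by norm_num)
    norm_num [e2, e3] at h
    linarith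
  have e5 : U 5 = 1985320512 := by
    have h := hrec 4 (by norm_num)
    norm_num [e3, e4] at h
    linarith
  have e6 : U 6 = 348219006744 := by
    have h := hrec 5 (by norm_num)
    norm_num [e4, e5] at h
    linarith
  have e7 : U 7 = 65085592725648 := by
    have h := hrec 6 (by norm_num)
    norm_num [e5, e6] at h
    linarith
  have e8 : U 8 = 12753825281316900 := by
    have h := hrec 7 (by norm_num)
    norm_num [e6, e7] at h
    linarith
  have e9 : U 9 = 2592090993453733200 := by
    have h := hrec 8 (by norm_num)
    norm_num [e7, e8] at h
    linarith
  have e10 : U 10 = 542345058701093666304 := by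
    have h := hrec 9 (by norm_num)
    norm_num [e8, e9] at h
    linarith
  have pos : ∀ m : ℕ, 0 < U m := by
    have key : ∀ m : ℕ, 0 < U m ∧ 0 < U (m + 1) := by
      intro m
      induction m with
      | zero => exact ⟨by rw [h0]; norm_num, by rw [h1]; norm_num⟩
      | succ k ih =>
        refine ⟨ih.2, ?_⟩
        have h := hrec (k + 1) (by omega)
        have e : k + 1 - 1 = k := rfl
        rw [e] at h
        rw [h]
        have hk1 : (1:ℝ) ≤ ((k + 1 : ℕ) : ℝ) := by exact_mod_cast Nat.succ_le_succ (Nat.zero_le k)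
        set y : ℝ := ((k + 1 : ℕ) : ℝ) with hy
        have hy0 : (0:ℝ) < y := by linarith
        have p1 : (0:ℝ) < 2 * y + 1 := by linarith
        have p2 : (0:ℝ) < 3 * y ^ 2 + 3 * y + 1 := by nlinarith [sq_nonneg y]
        have p3 : (0:ℝ) < 15 * y ^ 2 + 15 * y + 4 := by nlinarith [sq_nonneg y]
        have pd : (0:ℝ) < (y + 1) ^ 5 := by positivity
        have hA : 0 < 3 * (2 * y + 1) * (3 * y ^ 2 + 3 * y + 1) * (15 * y ^ 2 + 15 * y + 4)
            / (y + 1) ^ 5 :=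
          div_pos (mul_pos (mul_pos (mul_pos (by norm_num : (0:ℝ) < 3) p1) p2) p3) pd
        have q1 : (0:ℝ) < 3 * y ^ 3 := by positivity
        have q2 : (0:ℝ) < 3 * y - 1 := by linarith
        have q3 : (0:ℝ) < 3 * y + 1 := by linarith
        have hBc : 0 < 3 * y ^ 3 * (3 * y - 1) * (3 * y + 1) / (y + 1) ^ 5 :=
          div_pos (mul_pos (mul_pos q1 q2) q3) pd
        exact add_pos (mul_pos hA ih.2) (mul_pos hBc ih.1)
    exact fun m => (key m).1
  intro n hn
  by_cases hsmall : n ≤ 9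
  · interval_cases n <;> norm_num [h0, h1, e2, e3, e4, e5, e6, e7, e8, e9, e10]
  · push_neg at hsmall
    have hn10 : 10 ≤ n := hsmall
    have inv : ∀ m : ℕ, 10 ≤ m →
        (U m ^ 2 < crR (m : ℝ) * U m * U (m - 1) + crG (m : ℝ) * U (m - 1) ^ 2 ∧
         (U m + 4000 / (m : ℝ) ^ 2 * U (m - 1)) ^ 2 >
           crR (m : ℝ) * (U m + 4000 / (m : ℝ) ^ 2 * U (m - 1)) * U (m - 1)
             + crG (m : ℝ) * U (m - 1) ^ 2) := by
      intro m hm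
      induction m, hm using Nat.le_induction with
      | base =>
        constructor
        · show U 10 ^ 2 < crR ((10 : ℕ) : ℝ) * U 10 * U 9 + crG ((10 : ℕ) : ℝ) * U 9 ^ 2
          rw [crR, crG]
          norm_num [e9, e10]
        · show (U 10 + 4000 / ((10 : ℕ) : ℝ) ^ 2 * U 9) ^ 2 >
            crR ((10 : ℕ) : ℝ) * (U 10 + 4000 / ((10 : ℕ) : ℝ) ^ 2 * U 9) * U 9
              + crG ((10 : ℕ) : ℝ) * U 9 ^ 2
          rw [crR, crG]
          norm_num [e9, e10]
      | succ m hm ih =>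
        obtain ⟨ihA, ihB⟩ := ih
        have hmR : (10:ℝ) ≤ (m : ℝ) := by exact_mod_cast hm
        have hu : 0 < U (m - 1) := pos _
        have hm1 : 1 ≤ m - 1 := by omega
        have hg2 : U m = crR ((m - 1 : ℕ) : ℝ) * U (m - 1)
            + crG ((m - 1 : ℕ) : ℝ) * U (m - 1 - 1) := by
          have h := hrec (m - 1) hm1
          have em : m - 1 + 1 = m := by omega
          rwa [em] at h
        have hcast : ((m - 1 : ℕ) : ℝ) = (m : ℝ) - 1 := by
          have h1m : (1:ℕ) ≤ m := by omega
          push_cast [Nat.cast_sub h1m]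
          ring
        rw [hcast] at hg2
        have t1 : 202 ≤ crR ((m : ℝ) - 1) := crR_lb202 _ (by linarith)
        have t2 : 0 < crG ((m : ℝ) - 1) := crG_pos _ (by linarith)
        have t3 : 0 < U (m - 1 - 1) := pos _
        have hv202 : 202 * U (m - 1) < U m := by
          have hmul : 202 * U (m - 1) ≤ crR ((m : ℝ) - 1) * U (m - 1) :=
            mul_le_mul_of_nonneg_right t1 hu.le
          nlinarith [mul_pos t2 t3]
        have hw : U (m + 1) = crR (m : ℝ) * U m + crG (m : ℝ) * U (m - 1) := hrec m (by omega)
        have hr208 : 208 ≤ crR (m : ℝ) := crR_lb208 _ hmR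
        have hr270 : crR (m : ℝ) ≤ 270 := crR_le_270 _ (by linarith)
        have hr270' : crR ((m : ℝ) + 1) ≤ 270 := crR_le_270 _ (by linarith)
        have hg0 : 0 < crG (m : ℝ) := crG_pos _ (by linarith)
        have hg27 : crG (m : ℝ) ≤ 27 := crG_le27 _ (by linarith)
        have hdg0 : crG (m : ℝ) ≤ crG ((m : ℝ) + 1) := cr_dg_lb _ (by linarith)
        have hdg : crG ((m : ℝ) + 1) - crG (m : ℝ) ≤ 3 / 40 * (4000 / ((m : ℝ) + 1) ^ 2) := by
          have h := cr_dg_ub (m : ℝ) hmR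
          have he : (3:ℝ) / 40 * (4000 / ((m : ℝ) + 1) ^ 2) = 300 / ((m : ℝ) + 1) ^ 2 := by
            ring
          linarith
        have hdrl : (4000 / ((m : ℝ) + 1) ^ 2) / 40 ≤ crR ((m : ℝ) + 1) - crR (m : ℝ) := by
          have h := cr_dr_lb (m : ℝ) hmR
          have he : (4000 / ((m : ℝ) + 1) ^ 2) / 40 = 100 / ((m : ℝ) + 1) ^ 2 := by ring
          linarith
        have hdru : crR ((m : ℝ) + 1) - crR (m : ℝ) ≤ (4000 / ((m : ℝ) + 1) ^ 2) / 2 := by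
          have h := cr_dr_ub (m : ℝ) hmR
          have he : (4000 / ((m : ℝ) + 1) ^ 2) / 2 = 2000 / ((m : ℝ) + 1) ^ 2 := by ring
          linarith
        have hK0 : 0 < 4000 / ((m : ℝ) + 1) ^ 2 := by positivity
        have hK40 : 4000 / (m : ℝ) ^ 2 ≤ 40 := by
          rw [div_le_iff₀ (by positivity)]
          nlinarith
        have hKK : 4000 / ((m : ℝ) + 1) ^ 2 ≤ 4000 / (m : ℝ) ^ 2 := by
          rw [div_le_div_iff₀ (by positivity) (by positivity)]
          nlinarith
        have hK12 : 4000 / (m : ℝ) ^ 2 ≤ 121 / 100 * (4000 / ((m : ℝ) + 1) ^ 2) := by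
          rw [show (121:ℝ) / 100 * (4000 / ((m : ℝ) + 1) ^ 2) = 4840 / ((m : ℝ) + 1) ^ 2 by
            ring, div_le_div_iff₀ (by positivity) (by positivity)]
          nlinarith
        have key := cr_step (U (m - 1)) (U m) (U (m + 1)) (crR (m : ℝ)) (crR ((m : ℝ) + 1))
          (crG (m : ℝ)) (crG ((m : ℝ) + 1)) (4000 / (m : ℝ) ^ 2) (4000 / ((m : ℝ) + 1) ^ 2)
          hu hv202 hr208 hr270 hr270' hg0 hg27 hdg0 hdg hdrl hdru hK0 hK40 hKK hK12
          hw ihA ihB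
        have hc1 : (((m + 1) : ℕ) : ℝ) = (m : ℝ) + 1 := by push_cast; ring
        constructor
        · simpa only [hc1, Nat.add_sub_cancel] using key.1
        · simpa only [hc1, Nat.add_sub_cancel] using key.2
    obtain ⟨hA, -⟩ := inv n hn10
    have hw : U (n + 1) = crR (n : ℝ) * U n + crG (n : ℝ) * U (n - 1) := hrec n (by omega)
    have e : U (n - 1) * U (n + 1) =
        crR (n : ℝ) * U n * U (n - 1) + crG (n : ℝ) * U (n - 1) ^ 2 := by
      rw [hw]; ring
    linarith [hA, e]
end
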